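/- arXiv:math/0012236 — 8 statements merged into one kernel-verified Lean document; each statement's English description precedes it below -/
import Mathlib

section
/- The Poisson bracket on ℂ⁴ given by {zᵢ,zⱼ} = zᵢzⱼ for i<j, {zᵢ*,zⱼ*} = -zᵢ*zⱼ* for i<j, {zᵢ,zⱼ*} = -zᵢzⱼ* for i≠j, {zⱼ*,zⱼ} = Σ_{i<j} zⱼzⱼ* satisfies the Jacobi identity (on polynomial functions). -/
/-!
Every bracket of two generators is a scalar multiple of their product, i.e. the bracket is
log-canonical, `{X a, X b} = q a b • X a X b`. For such a bracket the Jacobi identity on three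
generators reduces to the vanishing of a cyclic sum of products of the `q`'s, which is forced by
antisymmetry of `q`. The Jacobiator of a skew biderivation is a derivation in each argument, so
it vanishes on all polynomials once it vanishes on generators.
-/

namespace MvPolynomial

variable {R σ : Type*} [CommRing R]

noncomputable def jacobiator (B : MvPolynomial σ R →ₗ[R] MvPolynomial σ R →ₗ[R] MvPolynomial σ R)
    (f g h : MvPolynomial σ R) : MvPolynomial σ R :=
  B f (B g h) + B g (B h f) + B h (B f g)

lemma jacobiator_rotate (B : MvPolynomial σ R →ₗ[R] MvPolynomial σ R →ₗ[R] MvPolynomial σ R)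
    (f g h : MvPolynomial σ R) : jacobiator B f g h = jacobiator B g h f := by
  unfold jacobiator; abel

def IsLogCanonical (B : MvPolynomial σ R →ₗ[R] MvPolynomial σ R →ₗ[R] MvPolynomial σ R) : Prop :=
  ∀ a b, ∃ c : R, B (X a) (X b) = C c * (X a * X b)

section SkewBiderivation

variable {B : MvPolynomial σ R →ₗ[R] MvPolynomial σ R →ₗ[R] MvPolynomial σ R}
  (hskew : ∀ f g, B f g = - B g f) (hleib : ∀ f g h, B (f * g) h = f * B g h + B f h * g)
include hskew hleib

lemma bracket_mul_right (f g h : MvPolynomial σ R) : B f (g * h) = g * B f h + B f g * h := by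
  rw [hskew f (g * h), hleib g h f, hskew g f, hskew h f]; ring

omit hskew in
lemma bracket_C_left (a : R) (f : MvPolynomial σ R) : B (C a) f = 0 := by
  have hB1 : B 1 f = 0 := by
    have h := hleib 1 1 f
    rw [one_mul, one_mul, mul_one] at h
    linear_combination -h
  rw [← mul_one (C a), ← smul_eq_C_mul, map_smul, LinearMap.smul_apply, hB1, smul_zero]

lemma bracket_C_right (f : MvPolynomial σ R) (a : R) : B f (C a) = 0 := by
  rw [hskew, bracket_C_left hleib, neg_zero]

lemma jacobiator_mul_left (f f' g h : MvPolynomial σ R) :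
    jacobiator B (f * f') g h = f * jacobiator B f' g h + jacobiator B f g h * f' := by
  have hmul := bracket_mul_right hskew hleib
  unfold jacobiator
  rw [hleib f f' (B g h), hmul h f f', map_add, hmul g f (B h f'), hmul g (B h f) f',
    hleib f f' g, map_add, hmul h f (B f' g), hmul h (B f g) f']
  linear_combination B h f' * hskew g f + B h f * hskew g f'

lemma jacobiator_eq_zero_of_X_left (g h : MvPolynomial σ R)
    (hX : ∀ n, jacobiator B (X n) g h = 0) (f : MvPolynomial σ R) : jacobiator B f g h = 0 := by
  induction f using MvPolynomial.induction_on with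
  | C a => simp [jacobiator, bracket_C_left hleib, bracket_C_right hskew hleib]
  | add p q hp hq =>
    simp only [jacobiator, map_add, LinearMap.add_apply] at hp hq ⊢
    linear_combination hp + hq
  | mul_X p n hp => rw [jacobiator_mul_left hskew hleib, hp, hX n, mul_zero, zero_mul, add_zero]

lemma jacobiator_eq_zero_of_X (hX : ∀ a b c, jacobiator B (X a) (X b) (X c) = 0)
    (f g h : MvPolynomial σ R) : jacobiator B f g h = 0 := by
  have hXX (a b : σ) (f : MvPolynomial σ R) : jacobiator B f (X a) (X b) = 0 :=
    jacobiator_eq_zero_of_X_left hskew hleib _ _ (fun n => hX n a b) f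
  have hX1 (a : σ) (f g : MvPolynomial σ R) : jacobiator B f g (X a) = 0 := by
    refine jacobiator_eq_zero_of_X_left hskew hleib _ _ (fun n => ?_) f
    rw [jacobiator_rotate B (X n) g (X a)]
    exact hXX a n g
  refine jacobiator_eq_zero_of_X_left hskew hleib g h (fun n => ?_) f
  rw [jacobiator_rotate B (X n) g h]
  exact hX1 n g h

lemma IsLogCanonical.jacobiator_X_eq_zero (hB : IsLogCanonical B) (a b c : σ) :
    jacobiator B (X a) (X b) (X c) = 0 := by
  choose q hq using hB
  have hswap : ∀ a b, B (X b) (X a) = -(C (q a b) * (X a * X b)) := fun a b => by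
    rw [hskew, hq]
  simp only [jacobiator, hq a b, hq b c, hq a c, hswap a b, hswap b c, hswap a c, map_neg,
    bracket_mul_right hskew hleib, bracket_C_right hskew hleib, mul_neg, neg_mul, zero_mul,
    add_zero]
  ring

lemma IsLogCanonical.jacobiator_eq_zero (hB : IsLogCanonical B) (f g h : MvPolynomial σ R) :
    jacobiator B f g h = 0 :=
  jacobiator_eq_zero_of_X hskew hleib (hB.jacobiator_X_eq_zero hskew hleib) f g h

end SkewBiderivation

lemma isLogCanonical_of_bracket_X {n : ℕ} [IsDomain R] [CharZero R]
    {B : MvPolynomial (Fin n ⊕ Fin n) R →ₗ[R]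
      MvPolynomial (Fin n ⊕ Fin n) R →ₗ[R] MvPolynomial (Fin n ⊕ Fin n) R}
    (hskew : ∀ f g, B f g = - B g f)
    (h1 : ∀ i j, i < j → B (X (.inl i)) (X (.inl j)) = X (.inl i) * X (.inl j))
    (h2 : ∀ i j, i < j → B (X (.inr i)) (X (.inr j)) = -(X (.inr i) * X (.inr j)))
    (h3 : ∀ i j, i ≠ j → B (X (.inl i)) (X (.inr j)) = -(X (.inl i) * X (.inr j)))
    (h4 : ∀ j, B (X (.inr j)) (X (.inl j)) =
      ∑ _ ∈ Finset.univ.filter (· < j), X (.inl j) * X (.inr j)) :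
    IsLogCanonical B := by
  have hself (a) : B (X a) (X a) = C 0 * (X a * X a) := by
    rw [map_zero, zero_mul, ← CharZero.eq_neg_self_iff]; exact hskew _ _
  have hswap {a b} {c : R} (h : B (X a) (X b) = C c * (X a * X b)) :
      B (X b) (X a) = C (-c) * (X b * X a) := by
    rw [hskew, h, map_neg]; ring
  have hcount (j : Fin n) : B (X (.inr j)) (X (.inl j)) =
      C ((Finset.univ.filter (· < j)).card : R) * (X (.inr j) * X (.inl j)) := by
    rw [h4, Finset.sum_const, nsmul_eq_mul, map_natCast]; ring
  have hzz {i j : Fin n} (h : i < j) :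
      B (X (.inl i)) (X (.inl j)) = C 1 * (X (.inl i) * X (.inl j)) := by
    rw [h1 i j h, map_one, one_mul]
  have hww {i j : Fin n} (h : i < j) :
      B (X (.inr i)) (X (.inr j)) = C (-1) * (X (.inr i) * X (.inr j)) := by
    rw [h2 i j h, map_neg, map_one]; ring
  have hzw {i j : Fin n} (h : i ≠ j) :
      B (X (.inl i)) (X (.inr j)) = C (-1) * (X (.inl i) * X (.inr j)) := by
    rw [h3 i j h, map_neg, map_one]; ring
  rintro (i | i) (j | j)
  · rcases lt_trichotomy i j with h | rfl | h
    exacts [⟨_, hzz h⟩, ⟨_, hself _⟩, ⟨_, hswap (hzz h)⟩]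
  · rcases eq_or_ne i j with rfl | h
    exacts [⟨_, hswap (hcount i)⟩, ⟨_, hzw h⟩]
  · rcases eq_or_ne j i with rfl | h
    exacts [⟨_, hcount j⟩, ⟨_, hswap (hzw h)⟩]
  · rcases lt_trichotomy i j with h | rfl | h
    exacts [⟨_, hww h⟩, ⟨_, hself _⟩, ⟨_, hswap (hww h)⟩]

end MvPolynomial

/-- The Poisson bracket on ℂ⁴ defined on the coordinate generators
`zᵢ = X (inl i)` and their conjugates `zᵢ* = X (inr i)` by
`{zᵢ,zⱼ} = zᵢzⱼ` (i<j), `{zᵢ*,zⱼ*} = -zᵢ*zⱼ*` (i<j), `{zᵢ,zⱼ*} = -zᵢzⱼ*` (i≠j),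
`{zⱼ*,zⱼ} = Σ_{i<j} zⱼzⱼ*`, extended bilinearly by the Leibniz rule,
satisfies the Jacobi identity on polynomial functions. -/
theorem poisson_bracket_jacobi
    (B : MvPolynomial (Fin 4 ⊕ Fin 4) ℂ →ₗ[ℂ]
         MvPolynomial (Fin 4 ⊕ Fin 4) ℂ →ₗ[ℂ] MvPolynomial (Fin 4 ⊕ Fin 4) ℂ)
    (z w : Fin 4 → MvPolynomial (Fin 4 ⊕ Fin 4) ℂ)
    (hz : ∀ i, z i = MvPolynomial.X (Sum.inl i))
    (hw : ∀ i, w i = MvPolynomial.X (Sum.inr i))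
    (hskew : ∀ f g, B f g = - B g f)
    (hleib : ∀ f g h, B (f * g) h = f * B g h + B f h * g)
    (h1 : ∀ i j, i < j → B (z i) (z j) = z i * z j)
    (h2 : ∀ i j, i < j → B (w i) (w j) = -(w i * w j))
    (h3 : ∀ i j, i ≠ j → B (z i) (w j) = -(z i * w j))
    (h4 : ∀ j, B (w j) (z j) = ∑ i ∈ Finset.univ.filter (· < j), z j * w j) :
    ∀ f g h, B f (B g h) + B g (B h f) + B h (B f g) = 0 := by
  simp only [hz, hw] at h1 h2 h3 h4
  exact (MvPolynomial.isLogCanonical_of_bracket_X hskew h1 h2 h3 h4).jacobiator_eq_zero hskew hleib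
end

section
/- In the tangent Lie bialgebra of U(4) with cobracket δ(Hᵢ) = 0, δ(H) = 0, δ(Eᵢ) = Eᵢ∧Hᵢ, δ(Fᵢ) = Fᵢ∧Hᵢ, the diagonal su(2) spanned by {H₁+H₃, E₁+E₃, F₁+F₃} is not coisotropic: δ(su(2)^d) is not contained in su(2)^d ∧ u(4). -/
open ExteriorAlgebra

noncomputable section

abbrev M4 := Matrix (Fin 4) (Fin 4) ℂ

/-- elementary matrices -/
noncomputable def elm (i j : Fin 4) : M4 := Matrix.single i j (1 : ℂ)

noncomputable def Hgen : Fin 3 → M4 := fun i =>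
  Complex.I • (elm i.castSucc i.castSucc - elm i.succ i.succ)
noncomputable def Egen : Fin 3 → M4 := fun i =>
  (2 * Complex.I)⁻¹ • (elm i.castSucc i.succ + elm i.succ i.castSucc)
noncomputable def Fgen : Fin 3 → M4 := fun i =>
  (2⁻¹ : ℂ) • (elm i.castSucc i.succ - elm i.succ i.castSucc)
noncomputable def Hc : M4 := Complex.I • (1 : M4)

/-- `ι x ∧ ι y` in the exterior algebra of `u(4)` (viewed inside all 4×4
complex matrices as a real vector space). -/
noncomputable def wedge (x y : M4) : ExteriorAlgebra ℝ M4 :=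
  ExteriorAlgebra.ι ℝ x * ExteriorAlgebra.ι ℝ y

/-- the diagonal su(2) -/
noncomputable def su2d : Submodule ℝ M4 :=
  Submodule.span ℝ {Hgen 0 + Hgen 2, Egen 0 + Egen 2, Fgen 0 + Fgen 2}

/-- `su(2)^d ∧ u(4)` inside `Λ² u(4)`. -/
noncomputable def Wd : Submodule ℝ (ExteriorAlgebra ℝ M4) :=
  Submodule.span ℝ {ω | ∃ x ∈ su2d, ∃ y : M4, y.conjTranspose = -y ∧ ω = wedge x y}

/-!
Pair bivectors with the 2-form `dualH ∧ dualE`, where `dualH` and `dualE` are, up to scale, the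
dual-basis functionals `H₁* - H₃*` and `E₁* - E₃*`. Both annihilate `su(2)^d`, so the 2-form
vanishes on `su(2)^d ∧ u(4)`, yet it takes the value `1` on `δ(E₁ + E₃) = E₁ ∧ H₁ + E₃ ∧ H₃`.
-/

namespace ExteriorAlgebra

variable {R M : Type*} [CommRing R] [AddCommGroup M] [Module R M]

def evalWedge (α β : Module.Dual R M) : ExteriorAlgebra R M →ₗ[R] R :=
  algebraMapInv.toLinearMap ∘ₗ CliffordAlgebra.contractLeft β ∘ₗ CliffordAlgebra.contractLeft α

theorem evalWedge_ι_mul_ι (α β : Module.Dual R M) (x y : M) :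
    evalWedge α β (ι R x * ι R y) = α x * β y - α y * β x := by
  simp only [evalWedge, LinearMap.comp_apply, AlgHom.toLinearMap_apply,
    CliffordAlgebra.contractLeft_ι_mul, CliffordAlgebra.contractLeft_ι, map_sub, map_smul, map_mul]
  simp [algebraMapInv]
  ring

end ExteriorAlgebra

def imEntry (i j : Fin 4) : M4 →ₗ[ℝ] ℝ := Complex.imLm ∘ₗ Matrix.entryLinearMap ℝ ℂ i j

@[simp]
theorem imEntry_apply (i j : Fin 4) (x : M4) : imEntry i j x = (x i j).im := rfl

def dualH : Module.Dual ℝ M4 := imEntry 0 0 - imEntry 2 2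

def dualE : Module.Dual ℝ M4 := imEntry 0 1 - imEntry 2 3

@[simp] theorem dualH_Hgen_zero : dualH (Hgen 0) = 1 := by simp [dualH, Hgen, elm]

@[simp] theorem dualH_Hgen_two : dualH (Hgen 2) = -1 := by simp [dualH, Hgen, elm]

@[simp] theorem dualH_Egen (i : Fin 3) : dualH (Egen i) = 0 := by
  fin_cases i <;> simp [dualH, Egen, elm]

@[simp] theorem dualH_Fgen (i : Fin 3) : dualH (Fgen i) = 0 := by
  fin_cases i <;> simp [dualH, Fgen, elm]

@[simp] theorem dualE_Hgen (i : Fin 3) : dualE (Hgen i) = 0 := by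
  fin_cases i <;> simp [dualE, Hgen, elm]

@[simp] theorem dualE_Egen_zero : dualE (Egen 0) = -2⁻¹ := by simp [dualE, Egen, elm]

@[simp] theorem dualE_Egen_two : dualE (Egen 2) = 2⁻¹ := by simp [dualE, Egen, elm]

@[simp] theorem dualE_Fgen (i : Fin 3) : dualE (Fgen i) = 0 := by
  fin_cases i <;> simp [dualE, Fgen, elm]

theorem su2d_le_ker_dualH_inf_ker_dualE : su2d ≤ LinearMap.ker dualH ⊓ LinearMap.ker dualE := by
  refine Submodule.span_le.2 ?_
  rintro x (rfl | rfl | rfl | -) <;> simp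

theorem Wd_le_ker_evalWedge : Wd ≤ LinearMap.ker (evalWedge dualH dualE) := by
  refine Submodule.span_le.2 ?_
  rintro _ ⟨x, hx, y, -, rfl⟩
  obtain ⟨hH, hE⟩ := Submodule.mem_inf.1 (su2d_le_ker_dualH_inf_ker_dualE hx)
  rw [LinearMap.mem_ker] at hH hE
  simp [wedge, evalWedge_ι_mul_ι, hH, hE]

theorem evalWedge_wedge_Egen_Hgen :
    evalWedge dualH dualE (wedge (Egen 0) (Hgen 0) + wedge (Egen 2) (Hgen 2)) = 1 := by
  norm_num [wedge, evalWedge_ι_mul_ι]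

theorem diagonal_su2_not_coisotropic_general
    (δ : M4 →ₗ[ℝ] ExteriorAlgebra ℝ M4)
    (hE : ∀ i, δ (Egen i) = wedge (Egen i) (Hgen i)) :
    ¬ (∀ x ∈ su2d, δ x ∈ Wd) := by
  intro h
  have hmem : Egen 0 + Egen 2 ∈ su2d := Submodule.subset_span (by simp)
  have hker := Wd_le_ker_evalWedge (h _ hmem)
  rw [LinearMap.mem_ker, map_add, hE, hE, evalWedge_wedge_Egen_Hgen] at hker
  exact one_ne_zero hker

/-- For the standard coboundary cobracket `δ` of `u(4)` (with `δ(Hᵢ)=δ(H)=0`,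
`δ(Eᵢ)=Eᵢ∧Hᵢ`, `δ(Fᵢ)=Fᵢ∧Hᵢ`), the diagonal `su(2)^d = span{H₁+H₃,E₁+E₃,F₁+F₃}`
is not coisotropic: `δ(su(2)^d) ⊄ su(2)^d ∧ u(4)`. -/
theorem diagonal_su2_not_coisotropic
    (δ : M4 →ₗ[ℝ] ExteriorAlgebra ℝ M4)
    (hH : ∀ i, δ (Hgen i) = 0) (hHc : δ Hc = 0)
    (hE : ∀ i, δ (Egen i) = wedge (Egen i) (Hgen i))
    (hF : ∀ i, δ (Fgen i) = wedge (Fgen i) (Hgen i)) :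
    ¬ (∀ x ∈ su2d, δ x ∈ Wd) :=
  diagonal_su2_not_coisotropic_general δ hE

end
end

section
/- In the *-algebra S⁷_q generated by z₁,...,z₄ with relations zᵢzⱼ = q zⱼzᵢ (i<j), zⱼ*zᵢ = q zᵢzⱼ* (i≠j), zₖ*zₖ = zₖzₖ* + (1-q²)Σ_{j<k} zⱼzⱼ*, Σₖ zₖzₖ* = 1, the elements a = z₁z₄* - z₂z₃*, b = z₁z₃ + q⁻¹z₂z₄, R = z₁z₁* + z₂z₂* satisfy Ra = q⁻²aR, Rb = q²bR, ab = q³ba, ab* = q⁻¹b*a, aa* + q²bb* = R(1-q²R), aa* = q²a*a + (1-q²)R², and b*b = q⁴bb* + (1-q²)R. -/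
/-!
Both sides of each relation are brought to the normal form in which, in every monomial, the
`zᵢ` stand to the left of the `zⱼ*`, the `zᵢ` in increasing and the `zⱼ*` in increasing order;
the two normal forms then agree coefficientwise. The only delicate rewrite is the sorting of the
`zⱼ*`: starring `zᵢzⱼ = q zⱼzᵢ` gives `zⱼ*zᵢ* = ε zᵢ*zⱼ*` with `ε = star (q • 1)` central but not
necessarily equal to `q`. Comparing `zₖ*zₗ = q zₗzₖ*` with the star of `zₗ*zₖ = q zₖzₗ*` shows
that `ε` acts as `q` on `zₖzₗ*` for `k ≠ l`, hence on the two-sided ideal these generate, and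
every monomial whose starred letters get sorted lies in that ideal.
-/

section StarAlgebraMap

variable {A : Type*} [Ring A] [StarRing A] [Algebra ℝ A]

theorem commute_star_algebraMap (r : ℝ) (x : A) : Commute (star (algebraMap ℝ A r)) x := by
  simpa using (Algebra.commute_algebraMap_left r (star x)).star_star

theorem star_smul_eq_star_algebraMap_mul (r : ℝ) (x : A) :
    star (r • x) = star (algebraMap ℝ A r) * star x := by
  rw [Algebra.smul_def, star_mul, (commute_star_algebraMap r _).eq]

theorem isUnit_star_algebraMap {r : ℝ} (hr : r ≠ 0) : IsUnit (star (algebraMap ℝ A r)) :=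
  ((isUnit_iff_ne_zero.mpr hr).map (algebraMap ℝ A)).star

/-- Without `StarModule ℝ A`, the central element `star (algebraMap ℝ A r)` need not be
`r • 1`; this predicate says that it acts as `r` on `m`. -/
def StarScalarAgrees (r : ℝ) (m : A) : Prop :=
  star (algebraMap ℝ A r) * m = r • m

namespace StarScalarAgrees

variable {r : ℝ} {m : A}

theorem mul_right (h : StarScalarAgrees r m) (x : A) : StarScalarAgrees r (m * x) := by
  rw [StarScalarAgrees, ← mul_assoc, h, smul_mul_assoc]

theorem smul (h : StarScalarAgrees r m) (s : ℝ) : StarScalarAgrees r (s • m) := by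
  rw [StarScalarAgrees, mul_smul_comm, h, smul_comm]

theorem of_smul {s : ℝ} (hs : s ≠ 0) (h : StarScalarAgrees r (s • m)) :
    StarScalarAgrees r m := by
  simpa [smul_smul, inv_mul_cancel₀ hs] using h.smul s⁻¹

theorem of_star_algebraMap_mul (hr : r ≠ 0)
    (h : StarScalarAgrees r (star (algebraMap ℝ A r) * m)) : StarScalarAgrees r m :=
  (isUnit_star_algebraMap hr).mul_left_cancel (by rw [h, mul_smul_comm])

theorem mul_star {x y : A} (hxy : star x * y = r • (y * star x))
    (hyx : star y * x = r • (x * star y)) : StarScalarAgrees r (x * star y) := by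
  have hstar := congrArg star hxy
  rw [star_mul, star_star, star_smul_eq_star_algebraMap_mul, star_mul, star_star] at hstar
  rw [StarScalarAgrees, ← hstar, hyx]

end StarScalarAgrees

end StarAlgebraMap

section QuantumSphere

variable {A : Type*} [Ring A] [Algebra ℝ A] {ι : Type*} {q : ℝ} {z : ι → A}

theorem mul_mul_swap_of_lt [Preorder ι] (hq : q ≠ 0)
    (rel1 : ∀ i j, i < j → z i * z j = q • (z j * z i)) {i j : ι} (hij : i < j) (t : A) :
    z j * (z i * t) = q⁻¹ • (z i * (z j * t)) := by
  rw [← mul_assoc, ← inv_smul_smul₀ hq (z j * z i), ← rel1 i j hij, smul_mul_assoc, mul_assoc]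

variable [StarRing A]

theorem star_mul_mul_swap (rel2 : ∀ i j, i ≠ j → star (z j) * z i = q • (z i * star (z j)))
    {i j : ι} (hij : i ≠ j) (t : A) :
    star (z j) * (z i * t) = q • (z i * (star (z j) * t)) := by
  rw [← mul_assoc, rel2 i j hij, smul_mul_assoc, mul_assoc]

theorem star_mul_self_mul [LinearOrder ι] [Fintype ι]
    (rel3 : ∀ k, star (z k) * z k =
      z k * star (z k) + (1 - q ^ 2) • ∑ j ∈ Finset.univ.filter (· < k), z j * star (z j))
    (k : ι) (t : A) :
    star (z k) * (z k * t) = z k * (star (z k) * t) +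
      (1 - q ^ 2) • ∑ j ∈ Finset.univ.filter (· < k), z j * (star (z j) * t) := by
  simp only [← mul_assoc, rel3 k, add_mul, smul_mul_assoc, Finset.sum_mul]

theorem starScalarAgrees_mul_star
    (rel2 : ∀ i j, i ≠ j → star (z j) * z i = q • (z i * star (z j)))
    {k l : ι} (hl : l ≠ k) : StarScalarAgrees q (z k * star (z l)) :=
  .mul_star (rel2 l k hl) (rel2 k l hl.symm)

theorem mul_star_mul_star_swap_of_starScalarAgrees [Preorder ι] (hq : q ≠ 0)
    (rel1 : ∀ i j, i < j → z i * z j = q • (z j * z i)) {x : A} {k : ι}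
    (hx : ∀ l, l ≠ k → StarScalarAgrees q (x * star (z l))) {i j : ι} (hij : i < j) (t : A) :
    x * (star (z j) * (star (z i) * t)) = q • (x * (star (z i) * (star (z j) * t))) := by
  have hswap : x * (star (z j) * (star (z i) * t)) =
      star (algebraMap ℝ A q) * (x * (star (z i) * (star (z j) * t))) := by
    have hstar := congrArg star (rel1 i j hij)
    rw [star_mul, star_smul_eq_star_algebraMap_mul, star_mul] at hstar
    rw [← mul_assoc (star (z j)), hstar, mul_assoc, ← (commute_star_algebraMap q _).left_comm,
      mul_assoc]
  have hagree : StarScalarAgrees q (x * (star (z i) * (star (z j) * t))) := by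
    rcases eq_or_ne i k with rfl | hik
    · refine .of_star_algebraMap_mul hq ?_
      rw [← hswap, ← mul_assoc]
      exact (hx j hij.ne').mul_right _
    · rw [← mul_assoc]
      exact (hx i hik).mul_right _
  rw [hswap, hagree]

theorem mul_star_mul_star_swap [Preorder ι] (hq : q ≠ 0)
    (rel1 : ∀ i j, i < j → z i * z j = q • (z j * z i))
    (rel2 : ∀ i j, i ≠ j → star (z j) * z i = q • (z i * star (z j)))
    (k : ι) {i j : ι} (hij : i < j) (t : A) :
    z k * (star (z j) * (star (z i) * t)) = q • (z k * (star (z i) * (star (z j) * t))) :=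
  mul_star_mul_star_swap_of_starScalarAgrees hq rel1
    (fun _ hl => starScalarAgrees_mul_star rel2 hl) hij t

theorem starScalarAgrees_mul_star_mul_star [LinearOrder ι] (hq : q ≠ 0)
    (rel1 : ∀ i j, i < j → z i * z j = q • (z j * z i))
    (rel2 : ∀ i j, i ≠ j → star (z j) * z i = q • (z i * star (z j)))
    (k a : ι) {l : ι} (hl : l ≠ k) : StarScalarAgrees q (z k * star (z a) * star (z l)) := by
  rcases eq_or_ne a k with rfl | ha
  · rcases hl.lt_or_gt with hlt | hgt
    · have hswap := mul_star_mul_star_swap hq rel1 rel2 a hlt 1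
      simp only [mul_one] at hswap
      rw [mul_assoc, hswap, ← mul_assoc]
      exact ((starScalarAgrees_mul_star rel2 hl).mul_right _).smul q
    · have hswap := mul_star_mul_star_swap hq rel1 rel2 a hgt 1
      simp only [mul_one] at hswap
      refine .of_smul hq ?_
      rw [mul_assoc, ← hswap, ← mul_assoc]
      exact (starScalarAgrees_mul_star rel2 hl).mul_right _
  · exact (starScalarAgrees_mul_star rel2 ha).mul_right _

theorem mul_star_mul_star_mul_star_swap [LinearOrder ι] (hq : q ≠ 0)
    (rel1 : ∀ i j, i < j → z i * z j = q • (z j * z i))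
    (rel2 : ∀ i j, i ≠ j → star (z j) * z i = q • (z i * star (z j)))
    (k a : ι) {i j : ι} (hij : i < j) (t : A) :
    z k * (star (z a) * (star (z j) * (star (z i) * t))) =
      q • (z k * (star (z a) * (star (z i) * (star (z j) * t)))) := by
  simpa only [mul_assoc] using mul_star_mul_star_swap_of_starScalarAgrees hq rel1
    (fun _ hl => starScalarAgrees_mul_star_mul_star hq rel1 rel2 k a hl) hij t

end QuantumSphere

/-- In the *-algebra `S⁷_q` generated by `z₁,…,z₄` with the quantum 7-sphere
relations, the elements `a = z₁z₄* - z₂z₃*`, `b = z₁z₃ + q⁻¹z₂z₄` and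
`R = z₁z₁* + z₂z₂*` satisfy the defining relations of the quantum 4-sphere
`Σ⁴_q`. -/
theorem quantum_4_sphere_relations
    (q : ℝ) (hq : q ≠ 0)
    (A : Type*) [Ring A] [StarRing A] [Algebra ℝ A]
    (z : Fin 4 → A)
    (rel1 : ∀ i j : Fin 4, i < j → z i * z j = q • (z j * z i))
    (rel2 : ∀ i j : Fin 4, i ≠ j → star (z j) * z i = q • (z i * star (z j)))
    (rel3 : ∀ k : Fin 4, star (z k) * z k =
      z k * star (z k) + (1 - q ^ 2) • ∑ j ∈ Finset.univ.filter (· < k), z j * star (z j))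
    (rel4 : ∑ k, z k * star (z k) = 1)
    (a b R : A)
    (ha : a = z 0 * star (z 3) - z 1 * star (z 2))
    (hb : b = z 0 * z 2 + q⁻¹ • (z 1 * z 3))
    (hR : R = z 0 * star (z 0) + z 1 * star (z 1)) :
    R * a = (q ^ 2)⁻¹ • (a * R) ∧
    R * b = q ^ 2 • (b * R) ∧
    a * b = q ^ 3 • (b * a) ∧
    a * star b = q⁻¹ • (star b * a) ∧
    a * star a + q ^ 2 • (b * star b) = R * (1 - q ^ 2 • R) ∧
    a * star a = q ^ 2 • (star a * a) + (1 - q ^ 2) • R ^ 2 ∧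
    star b * b = q ^ 4 • (b * star b) + (1 - q ^ 2) • R := by
  rw [Fin.sum_univ_four] at rel4
  have hb' : b = z 0 * z 2 + z 3 * z 1 := by rw [hb, rel1 1 3 (by decide), inv_smul_smul₀ hq]
  -- Homogenise: the terms of degree two are multiplied by `∑ zₖzₖ* = 1`.
  rw [← mul_one ((1 - q ^ 2) • R), ← rel4]
  subst ha hR
  rw [hb']
  refine ⟨?_, ?_, ?_, ?_, ?_, ?_, ?_⟩
  -- A trailing factor `1` gives every monomial the suffix `t` the rewrite rules expect.
  all_goals refine (mul_one _).symm.trans (Eq.trans ?_ (mul_one _))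
  all_goals simp (disch := decide) only [star_add, star_sub, star_mul, star_star, pow_two, mul_add,
    add_mul, mul_sub, sub_mul, smul_add, smul_sub, smul_smul, smul_mul_assoc, mul_smul_comm,
    mul_assoc, mul_mul_swap_of_lt hq rel1, star_mul_mul_swap rel2, star_mul_self_mul rel3,
    mul_star_mul_star_swap hq rel1 rel2, mul_star_mul_star_mul_star_swap hq rel1 rel2,
    Finset.sum_filter, Fin.sum_univ_four, Fin.reduceLT, ↓reduceIte, smul_zero, add_zero]
  all_goals match_scalars <;> field_simp <;> ring
end

section
/- The elements a = z₁z₄* - z₂z₃*, b = z₁z₃ + q⁻¹z₂z₄ and R = z₁z₁* + z₂z₂* of S⁷_q are coinvariant under the right SU_q(2)-coaction Δ_r = (id⊗r)∘Δ, i.e. Δ_r(x) = x ⊗ r(1) for x ∈ {a,b,R}. -/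
open scoped TensorProduct

/-- In `U_q(4)` (given by the generators `t i j` with the FRT relations,
unitarity, and comultiplication `Δ(tᵢⱼ) = Σₖ tᵢₖ ⊗ tₖⱼ`), let
`r : U_q(4) → SU_q(2)` be the quotient by the right ideal, two-sided coideal
`R·U_q(4)` generated by
`{t₁₃,t₃₁,t₁₄,t₄₁,t₂₄,t₄₂,t₂₃,t₃₂,t₁₁-t₄₄,t₁₂+t₄₃,t₂₁+t₃₄,t₂₂-t₃₃,t₁₁t₂₂-q t₁₂t₂₁-1}`.
Then the elements `a = z₁z₄* - z₂z₃*`, `b = z₁z₃ + q⁻¹z₂z₄`,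
`R = z₁z₁* + z₂z₂*` of `S⁷_q` (with `zᵢ = t₄ᵢ`) are coinvariant for the
coaction `Δ_r = (id ⊗ r) ∘ Δ`: each satisfies `Δ_r(x) = x ⊗ r(1)`. -/
theorem coinvariance_of_quantum_4_sphere_generators
    (q : ℝ) (hq : q ≠ 0)
    (A : Type*) [Ring A] [StarRing A] [Algebra ℝ A]
    (t : Fin 4 → Fin 4 → A)
    -- FRT relations of `U_q(4)`
    (rel1 : ∀ i j k : Fin 4, i < j → t i k * t j k = q • (t j k * t i k))
    (rel2 : ∀ k i j : Fin 4, i < j → t k i * t k j = q • (t k j * t k i))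
    (rel3 : ∀ i j k l : Fin 4, i < j → k < l → t i l * t j k = t j k * t i l)
    (rel4 : ∀ i j k l : Fin 4, i < j → k < l →
      t i k * t j l - t j l * t i k = (q - q⁻¹) • (t j k * t i l))
    -- compact real form: the matrix `t` is unitary
    (hunit1 : ∀ i j : Fin 4, ∑ k, t i k * star (t j k) = if i = j then 1 else 0)
    (hunit2 : ∀ i j : Fin 4, ∑ k, star (t k i) * t k j = if i = j then 1 else 0)
    -- comultiplication
    (Δ : A →ₐ[ℝ] A ⊗[ℝ] A)
    (hΔ : ∀ i j, Δ (t i j) = ∑ k, t i k ⊗ₜ[ℝ] t k j)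
    (hΔstar : ∀ i j, Δ (star (t i j)) = ∑ k, star (t i k) ⊗ₜ[ℝ] star (t k j))
    -- the quotient map onto `SU_q(2)` kills the right ideal `R·U_q(4)`
    (K : Type*) [AddCommGroup K] [Module ℝ K]
    (r : A →ₗ[ℝ] K)
    (hker : ∀ x ∈ ({t 0 2, t 2 0, t 0 3, t 3 0, t 1 3, t 3 1, t 1 2, t 2 1,
                    t 0 0 - t 3 3, t 0 1 + t 3 2, t 1 0 + t 2 3, t 1 1 - t 2 2,
                    t 0 0 * t 1 1 - q • (t 0 1 * t 1 0) - 1} : Set A),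
            ∀ u : A, r (x * u) = 0)
    (z : Fin 4 → A) (hz : ∀ i, z i = t 3 i)
    (a b R : A)
    (ha : a = z 0 * star (z 3) - z 1 * star (z 2))
    (hb : b = z 0 * z 2 + q⁻¹ • (z 1 * z 3))
    (hR : R = z 0 * star (z 0) + z 1 * star (z 1)) :
    LinearMap.lTensor A r (Δ a) = a ⊗ₜ[ℝ] r 1 ∧
    LinearMap.lTensor A r (Δ b) = b ⊗ₜ[ℝ] r 1 ∧
    LinearMap.lTensor A r (Δ R) = R ⊗ₜ[ℝ] r 1 := by
  have hqq : q⁻¹ * q = 1 := inv_mul_cancel₀ hq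
  -- the single generators in the kernel
  have k02 : ∀ u, r (t 0 2 * u) = 0 := hker _ (by simp)
  have k20 : ∀ u, r (t 2 0 * u) = 0 := hker _ (by simp)
  have k03 : ∀ u, r (t 0 3 * u) = 0 := hker _ (by simp)
  have k30 : ∀ u, r (t 3 0 * u) = 0 := hker _ (by simp)
  have k13 : ∀ u, r (t 1 3 * u) = 0 := hker _ (by simp)
  have k31 : ∀ u, r (t 3 1 * u) = 0 := hker _ (by simp)
  have k12 : ∀ u, r (t 1 2 * u) = 0 := hker _ (by simp)
  have k21 : ∀ u, r (t 2 1 * u) = 0 := hker _ (by simp)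
  -- the identification relations
  have e00 : ∀ u, r (t 0 0 * u) = r (t 3 3 * u) := by
    intro u
    have h := hker (t 0 0 - t 3 3) (by simp) u
    rw [sub_mul, map_sub, sub_eq_zero] at h
    exact h
  have e01 : ∀ u, r (t 0 1 * u) = - r (t 3 2 * u) := by
    intro u
    have h := hker (t 0 1 + t 3 2) (by simp) u
    rw [add_mul, map_add] at h
    exact eq_neg_of_add_eq_zero_left h
  have e10 : ∀ u, r (t 1 0 * u) = - r (t 2 3 * u) := by
    intro u
    have h := hker (t 1 0 + t 2 3) (by simp) u
    rw [add_mul, map_add] at h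
    exact eq_neg_of_add_eq_zero_left h
  have e11 : ∀ u, r (t 1 1 * u) = r (t 2 2 * u) := by
    intro u
    have h := hker (t 1 1 - t 2 2) (by simp) u
    rw [sub_mul, map_sub, sub_eq_zero] at h
    exact h
  have det1 : r (t 0 0 * t 1 1) = q • r (t 0 1 * t 1 0) + r 1 := by
    have h := hker (t 0 0 * t 1 1 - q • (t 0 1 * t 1 0) - 1) (by simp) 1
    rw [mul_one, map_sub, map_sub, map_smul, sub_sub, sub_eq_zero] at h
    exact h
  -- consequences of unitarity
  have u3 : ∀ l, r (t 3 3 * star (t l 3)) + r (t 3 2 * star (t l 2))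
      = if (3 : Fin 4) = l then r 1 else 0 := by
    intro l
    have h := congrArg r (hunit1 3 l)
    simp only [Fin.sum_univ_four, map_add, k30, k31, zero_add, apply_ite r, map_zero,
      map_one] at h
    rw [add_comm] at h
    exact h
  have u2 : ∀ l, r (t 2 3 * star (t l 3)) + r (t 2 2 * star (t l 2))
      = if (2 : Fin 4) = l then r 1 else 0 := by
    intro l
    have h := congrArg r (hunit1 2 l)
    simp only [Fin.sum_univ_four, map_add, k20, k21, zero_add, apply_ite r, map_zero,
      map_one] at h
    rw [add_comm] at h
    exact h
  -- values of `r` on the second legs of `Δ a`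
  have va0 : ∀ l, r (t 0 0 * star (t l 3) - t 0 1 * star (t l 2))
      = if (3 : Fin 4) = l then r 1 else 0 := by
    intro l
    rw [map_sub, e00, e01, sub_neg_eq_add, u3 l]
  have va1 : ∀ l, r (t 1 0 * star (t l 3) - t 1 1 * star (t l 2))
      = -(if (2 : Fin 4) = l then r 1 else 0) := by
    intro l
    rw [map_sub, e10, e11, ← u2 l]
    abel
  have va2 : ∀ l, r (t 2 0 * star (t l 3) - t 2 1 * star (t l 2)) = 0 := by
    intro l
    rw [map_sub, k20, k21, sub_zero]
  have va3 : ∀ l, r (t 3 0 * star (t l 3) - t 3 1 * star (t l 2)) = 0 := by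
    intro l
    rw [map_sub, k30, k31, sub_zero]
  -- auxiliary relations for `b`
  have r32_03 : r (t 3 2 * t 0 3) = 0 := by
    rw [← rel3 0 3 2 3 (by decide) (by decide)]; exact k03 _
  have r33_02 : r (t 3 3 * t 0 2) = 0 := by
    have h := congrArg r (rel4 0 3 2 3 (by decide) (by decide))
    rw [map_sub, map_smul, k02, r32_03, smul_zero, zero_sub, neg_eq_zero] at h
    exact h
  have r32_13 : r (t 3 2 * t 1 3) = 0 := by
    rw [← rel3 1 3 2 3 (by decide) (by decide)]; exact k13 _
  have r33_12 : r (t 3 3 * t 1 2) = 0 := by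
    have h := congrArg r (rel4 1 3 2 3 (by decide) (by decide))
    rw [map_sub, map_smul, k12, r32_13, smul_zero, zero_sub, neg_eq_zero] at h
    exact h
  have r23_32 : r (t 2 3 * t 3 2) = r (t 3 2 * t 2 3) :=
    congrArg r (rel3 2 3 2 3 (by decide) (by decide))
  have r01_10 : r (t 0 1 * t 1 0) = r (t 3 2 * t 2 3) := by
    rw [e01]
    have h := congrArg r (rel4 1 3 0 2 (by decide) (by decide))
    rw [map_sub, map_smul, k30, smul_zero, sub_eq_zero] at h
    rw [← h, e10, neg_neg, r23_32]
  have r33_11 : r (t 3 3 * t 1 1) = q • r (t 3 2 * t 2 3) + r 1 := by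
    rw [← e00, det1, r01_10]
  have r11_33 : r (t 1 1 * t 3 3) = q • r (t 3 2 * t 2 3) + r 1 := by
    have h := congrArg r (rel4 1 3 1 3 (by decide) (by decide))
    rw [map_sub, map_smul, k31, smul_zero, sub_eq_zero] at h
    rw [h, r33_11]
  have r22_33 : r (t 2 2 * t 3 3) = q • r (t 3 2 * t 2 3) + r 1 := by
    rw [← e11, r11_33]
  have r33_22 : r (t 3 3 * t 2 2)
      = q • r (t 3 2 * t 2 3) + r 1 - (q - q⁻¹) • r (t 3 2 * t 2 3) := by
    have h := congrArg r (rel4 2 3 2 3 (by decide) (by decide))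
    rw [map_sub, map_smul] at h
    have h2 : r (t 3 3 * t 2 2) = r (t 2 2 * t 3 3) - (q - q⁻¹) • r (t 3 2 * t 2 3) := by
      rw [← h]; abel
    rw [h2, r22_33]
  have r22_03 : r (t 2 2 * t 0 3) = 0 := by
    rw [← e11, ← rel3 0 1 1 3 (by decide) (by decide)]; exact k03 _
  have r23_02 : r (t 2 3 * t 0 2) = 0 := by
    have h := congrArg r (rel4 0 2 2 3 (by decide) (by decide))
    rw [map_sub, map_smul, k02, r22_03, smul_zero, zero_sub, neg_eq_zero] at h
    exact h
  have r22_13 : r (t 2 2 * t 1 3) = 0 := by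
    rw [← e11]
    have h := congrArg r (rel2 1 1 3 (by decide))
    rw [map_smul, k13, smul_zero] at h
    exact h
  have r23_12 : r (t 2 3 * t 1 2) = 0 := by
    have h := congrArg r (rel4 1 2 2 3 (by decide) (by decide))
    rw [map_sub, map_smul, k12, r22_13, smul_zero, zero_sub, neg_eq_zero] at h
    exact h
  have r23_22 : r (t 2 3 * t 2 2) = q⁻¹ • r (t 2 2 * t 2 3) := by
    have h := congrArg r (rel2 2 2 3 (by decide))
    rw [map_smul] at h
    rw [h, smul_smul, hqq, one_smul]
  -- values of `r` on the second legs of `Δ b`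
  have vb0 : ∀ l, r (t 0 0 * t l 2 + q⁻¹ • (t 0 1 * t l 3))
      = if (2 : Fin 4) = l then r 1 else 0 := by
    intro l
    fin_cases l
    · show r (t 0 0 * t 0 2 + q⁻¹ • (t 0 1 * t 0 3)) = _
      rw [map_add, map_smul, e00, e01, r33_02, r32_03]
      simp
    · show r (t 0 0 * t 1 2 + q⁻¹ • (t 0 1 * t 1 3)) = _
      rw [map_add, map_smul, e00, e01, r33_12, r32_13]
      simp
    · show r (t 0 0 * t 2 2 + q⁻¹ • (t 0 1 * t 2 3)) = if (2 : Fin 4) = 2 then r 1 else 0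
      rw [map_add, map_smul, e00, e01, r33_22, if_pos rfl]
      module
    · show r (t 0 0 * t 3 2 + q⁻¹ • (t 0 1 * t 3 3)) = _
      rw [map_add, map_smul, e00, e01]
      have h := congrArg r (rel2 3 2 3 (by decide))
      rw [map_smul] at h
      rw [h, smul_neg, smul_smul, hqq, one_smul]
      simp
  have vb1 : ∀ l, r (t 1 0 * t l 2 + q⁻¹ • (t 1 1 * t l 3))
      = if (3 : Fin 4) = l then q⁻¹ • r 1 else 0 := by
    intro l
    fin_cases l
    · show r (t 1 0 * t 0 2 + q⁻¹ • (t 1 1 * t 0 3)) = _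
      rw [map_add, map_smul, e10, e11, r23_02, r22_03]
      simp
    · show r (t 1 0 * t 1 2 + q⁻¹ • (t 1 1 * t 1 3)) = _
      rw [map_add, map_smul, e10, e11, r23_12, r22_13]
      simp
    · show r (t 1 0 * t 2 2 + q⁻¹ • (t 1 1 * t 2 3)) = _
      rw [map_add, map_smul, e10, e11, r23_22]
      simp
    · show r (t 1 0 * t 3 2 + q⁻¹ • (t 1 1 * t 3 3))
          = if (3 : Fin 4) = 3 then q⁻¹ • r 1 else 0
      rw [map_add, map_smul, e10, e11, r23_32, r22_33, if_pos rfl, smul_add, smul_smul,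
        hqq, one_smul]
      abel
  have vb2 : ∀ l, r (t 2 0 * t l 2 + q⁻¹ • (t 2 1 * t l 3)) = 0 := by
    intro l
    rw [map_add, map_smul, k20, k21, smul_zero, add_zero]
  have vb3 : ∀ l, r (t 3 0 * t l 2 + q⁻¹ • (t 3 1 * t l 3)) = 0 := by
    intro l
    rw [map_add, map_smul, k30, k31, smul_zero, add_zero]
  -- values of `r` on the second legs of `Δ R`
  have vR0 : ∀ l, r (t 0 0 * star (t l 0) + t 0 1 * star (t l 1))
      = if (0 : Fin 4) = l then r 1 else 0 := by
    intro l
    have h := congrArg r (hunit1 0 l)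
    simp only [Fin.sum_univ_four, map_add, k02, k03, add_zero, apply_ite r, map_zero,
      map_one] at h
    rw [map_add]
    exact h
  have vR1 : ∀ l, r (t 1 0 * star (t l 0) + t 1 1 * star (t l 1))
      = if (1 : Fin 4) = l then r 1 else 0 := by
    intro l
    have h := congrArg r (hunit1 1 l)
    simp only [Fin.sum_univ_four, map_add, k12, k13, add_zero, apply_ite r, map_zero,
      map_one] at h
    rw [map_add]
    exact h
  have vR2 : ∀ l, r (t 2 0 * star (t l 0) + t 2 1 * star (t l 1)) = 0 := by
    intro l
    rw [map_add, k20, k21, add_zero]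
  have vR3 : ∀ l, r (t 3 0 * star (t l 0) + t 3 1 * star (t l 1)) = 0 := by
    intro l
    rw [map_add, k30, k31, add_zero]
  -- expansion of the coproduct on products of generators
  have hmulss : ∀ p p' : Fin 4, Δ (t 3 p * star (t 3 p'))
      = ∑ k, ∑ l, (t 3 k * star (t 3 l)) ⊗ₜ[ℝ] (t k p * star (t l p')) := by
    intro p p'
    rw [map_mul, hΔ, hΔstar, Finset.sum_mul_sum]
    simp only [Algebra.TensorProduct.tmul_mul_tmul]
  have hmultt : ∀ p p' : Fin 4, Δ (t 3 p * t 3 p')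
      = ∑ k, ∑ l, (t 3 k * t 3 l) ⊗ₜ[ℝ] (t k p * t l p') := by
    intro p p'
    rw [map_mul, hΔ, hΔ, Finset.sum_mul_sum]
    simp only [Algebra.TensorProduct.tmul_mul_tmul]
  have hΔa : Δ a = ∑ k, ∑ l, (t 3 k * star (t 3 l)) ⊗ₜ[ℝ]
      (t k 0 * star (t l 3) - t k 1 * star (t l 2)) := by
    rw [ha, hz 0, hz 1, hz 2, hz 3, map_sub, hmulss 0 3, hmulss 1 2,
      ← Finset.sum_sub_distrib]
    refine Finset.sum_congr rfl fun k _ => ?_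
    rw [← Finset.sum_sub_distrib]
    refine Finset.sum_congr rfl fun l _ => ?_
    rw [TensorProduct.tmul_sub]
  have hΔb : Δ b = ∑ k, ∑ l, (t 3 k * t 3 l) ⊗ₜ[ℝ]
      (t k 0 * t l 2 + q⁻¹ • (t k 1 * t l 3)) := by
    rw [hb, hz 0, hz 1, hz 2, hz 3, map_add, map_smul, hmultt 0 2, hmultt 1 3]
    simp only [Finset.smul_sum]
    rw [← Finset.sum_add_distrib]
    refine Finset.sum_congr rfl fun k _ => ?_
    rw [← Finset.sum_add_distrib]
    refine Finset.sum_congr rfl fun l _ => ?_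
    rw [TensorProduct.tmul_add, TensorProduct.tmul_smul]
  have hΔR : Δ R = ∑ k, ∑ l, (t 3 k * star (t 3 l)) ⊗ₜ[ℝ]
      (t k 0 * star (t l 0) + t k 1 * star (t l 1)) := by
    rw [hR, hz 0, hz 1, map_add, hmulss 0 0, hmulss 1 1, ← Finset.sum_add_distrib]
    refine Finset.sum_congr rfl fun k _ => ?_
    rw [← Finset.sum_add_distrib]
    refine Finset.sum_congr rfl fun l _ => ?_
    rw [TensorProduct.tmul_add]
  refine ⟨?_, ?_, ?_⟩
  · rw [hΔa]
    simp only [map_sum, LinearMap.lTensor_tmul]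
    simp only [Fin.sum_univ_four, va0, va1, va2, va3]
    simp only [show ((3:Fin 4) = 0) = False by simp, show ((3:Fin 4) = 1) = False by simp,
      show ((3:Fin 4) = 2) = False by simp, show ((3:Fin 4) = 3) = True by simp,
      show ((2:Fin 4) = 0) = False by simp, show ((2:Fin 4) = 1) = False by simp,
      show ((2:Fin 4) = 2) = True by simp, show ((2:Fin 4) = 3) = False by simp,
      if_true, if_false]
    rw [ha, hz 0, hz 1, hz 2, hz 3]
    simp [TensorProduct.tmul_zero, TensorProduct.tmul_neg, TensorProduct.sub_tmul,
      TensorProduct.add_tmul, TensorProduct.neg_tmul, sub_eq_add_neg]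
  · rw [hΔb]
    simp only [map_sum, LinearMap.lTensor_tmul]
    simp only [Fin.sum_univ_four, vb0, vb1, vb2, vb3]
    simp only [show ((3:Fin 4) = 0) = False by simp, show ((3:Fin 4) = 1) = False by simp,
      show ((3:Fin 4) = 2) = False by simp, show ((3:Fin 4) = 3) = True by simp,
      show ((2:Fin 4) = 0) = False by simp, show ((2:Fin 4) = 1) = False by simp,
      show ((2:Fin 4) = 2) = True by simp, show ((2:Fin 4) = 3) = False by simp,
      if_true, if_false]
    rw [hb, hz 0, hz 1, hz 2, hz 3]
    simp [TensorProduct.tmul_zero, TensorProduct.tmul_smul, TensorProduct.add_tmul,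
      TensorProduct.smul_tmul]
  · rw [hΔR]
    simp only [map_sum, LinearMap.lTensor_tmul]
    simp only [Fin.sum_univ_four, vR0, vR1, vR2, vR3]
    simp only [show ((0:Fin 4) = 0) = True by simp, show ((0:Fin 4) = 1) = False by simp,
      show ((0:Fin 4) = 2) = False by simp, show ((0:Fin 4) = 3) = False by simp,
      show ((1:Fin 4) = 0) = False by simp, show ((1:Fin 4) = 1) = True by simp,
      show ((1:Fin 4) = 2) = False by simp, show ((1:Fin 4) = 3) = False by simp,
      if_true, if_false]
    rw [hR, hz 0, hz 1]
    simp [TensorProduct.tmul_zero, TensorProduct.add_tmul]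
end

section
/- The formulas σ(R)|n₁,n₂⟩ = q^{2(n₁+n₂)}|n₁,n₂⟩, σ(a)|n₁,n₂⟩ = q^{n₁+2n₂-1}(1-q^{2n₁})^{1/2}|n₁-1,n₂⟩, σ(b)|n₁,n₂⟩ = q^{n₁+n₂}(1-q^{2(n₂+1)})^{1/2}|n₁,n₂+1⟩ define a unitary *-representation of Σ⁴_q on ℓ²(ℕ)⊗ℓ²(ℕ): the operators σ(a), σ(b), σ(R) are bounded and satisfy all defining relations of Σ⁴_q. -/
/-!
The three operators are weighted shifts for the basis `e`: each sends `e n` to a real multiple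
`w n • e (s n)`. A bounded weight along an injective `s` defines a bounded operator, and the adjoint
of the shift along `t` with weight `w ∘ t` is the shift along a left inverse of `t` with weight `w`,
as long as `w` vanishes off the range of `t`. Since `n ↦ (n₁ - 1, n₂)` is not injective, `σ(a)` is
built as the adjoint of the shift raising `n₁`; its weight carries the factor `√(1 - q ^ (2 n₁))`,
which vanishes at `n₁ = 0` and so absorbs the truncated subtraction. Products, sums and adjoints of
weighted shifts are again weighted shifts, so every defining relation of `Σ⁴_q` becomes an identity
between real weights, in which the square roots only occur squared.
-/

open ContinuousLinearMap

open scoped InnerProductSpace lp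

namespace HilbertBasis

variable {ι 𝕜 H : Type*} [RCLike 𝕜] [NormedAddCommGroup H] [InnerProductSpace 𝕜 H]
  (e : HilbertBasis ι 𝕜 H)

theorem ext_inner {x y : H} (h : ∀ i, ⟪e i, x⟫_𝕜 = ⟪e i, y⟫_𝕜) : x = y :=
  e.repr.injective <| lp.ext <| funext fun i => by simp only [e.repr_apply_apply, h]

theorem continuousLinearMap_ext {T S : H →L[𝕜] H} (h : ∀ i, T (e i) = S (e i)) : T = S :=
  ContinuousLinearMap.ext_on (Submodule.dense_iff_topologicalClosure_eq_top.mpr e.dense_span)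
    (by rintro _ ⟨i, rfl⟩; exact h i)

def IsWeightedShift (T : H →L[𝕜] H) (w : ι → ℝ) (s : ι → ι) : Prop :=
  ∀ i, T (e i) = (w i : 𝕜) • e (s i)

namespace IsWeightedShift

variable {e} {T S : H →L[𝕜] H} {w v : ι → ℝ} {s t : ι → ι}

theorem one : e.IsWeightedShift 1 1 id := fun i => by simp

theorem mul (hT : e.IsWeightedShift T w s) (hS : e.IsWeightedShift S v t) :
    e.IsWeightedShift (T * S) (fun i => v i * w (t i)) (s ∘ t) := fun i => by
  simp only [mul_apply_eq_comp, hS i, map_smul, hT (t i), smul_smul, RCLike.ofReal_mul,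
    Function.comp_apply]

theorem smul (hT : e.IsWeightedShift T w s) {c : 𝕜} {r : ℝ} (hc : c = r) :
    e.IsWeightedShift (c • T) (fun i => r * w i) s := fun i => by
  simp only [smul_apply, hT i, smul_smul, hc, RCLike.ofReal_mul]

theorem add (hT : e.IsWeightedShift T w s) (hS : e.IsWeightedShift S v s) :
    e.IsWeightedShift (T + S) (w + v) s := fun i => by
  simp only [add_apply, hT i, hS i, Pi.add_apply, RCLike.ofReal_add, add_smul]

theorem sub (hT : e.IsWeightedShift T w s) (hS : e.IsWeightedShift S v s) :
    e.IsWeightedShift (T - S) (w - v) s := fun i => by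
  simp only [sub_apply, hT i, hS i, Pi.sub_apply, RCLike.ofReal_sub, sub_smul]

theorem eq_of_weight_eq (hT : e.IsWeightedShift T w s) (hS : e.IsWeightedShift S v s)
    (h : ∀ i, w i = v i) : T = S :=
  e.continuousLinearMap_ext fun i => by rw [hT i, hS i, h i]

variable [CompleteSpace H]

theorem adjoint (hT : e.IsWeightedShift T (w ∘ t) t) (hst : Function.LeftInverse s t)
    (hw : ∀ j, j ∉ Set.range t → w j = 0) : e.IsWeightedShift (adjoint T) w s := by
  classical
  intro j
  refine e.ext_inner fun i => ?_
  rw [adjoint_inner_right, hT, inner_smul_left, inner_smul_right, RCLike.conj_ofReal,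
    orthonormal_iff_ite.mp e.orthonormal, orthonormal_iff_ite.mp e.orthonormal]
  by_cases hij : t i = j
  · subst hij
    simp [hst i]
  · rw [if_neg hij, mul_zero]
    split_ifs with hi
    · subst hi
      rw [hw j fun ⟨m, hm⟩ => hij (by rw [← hm, hst m]), RCLike.ofReal_zero, zero_mul]
    · rw [mul_zero]

theorem adjoint_eq_self (hT : e.IsWeightedShift T w id) : ContinuousLinearMap.adjoint T = T :=
  have hT' := hT.adjoint (t := id) (fun _ => rfl) fun j hj => absurd (Set.mem_range_self j) hj
  hT'.eq_of_weight_eq hT fun _ => rfl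

theorem adjoint_mul_self (hT : e.IsWeightedShift T (w ∘ t) t) (hst : Function.LeftInverse s t)
    (hw : ∀ j, j ∉ Set.range t → w j = 0) :
    e.IsWeightedShift (ContinuousLinearMap.adjoint T * T) (fun i => w (t i) ^ 2) id := by
  simpa only [sq, hst.comp_eq_id, Function.comp_apply] using (hT.adjoint hst hw).mul hT

theorem mul_adjoint (hT : e.IsWeightedShift T (w ∘ t) t) (hst : Function.LeftInverse s t)
    (hw : ∀ j, j ∉ Set.range t → w j = 0) :
    e.IsWeightedShift (T * ContinuousLinearMap.adjoint T) (fun i => w i ^ 2) id := by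
  intro j
  rw [mul_apply_eq_comp, hT.adjoint hst hw j, map_smul, hT]
  by_cases hj : j ∈ Set.range t
  · obtain ⟨i, rfl⟩ := hj
    simp only [Function.comp_apply, hst i, smul_smul, RCLike.ofReal_mul, sq, id]
  · simp [hw j hj]

end IsWeightedShift

theorem exists_isWeightedShift [CompleteSpace H] {w : ι → ℝ} {s : ι → ι}
    (hs : Function.Injective s) {C : ℝ} (hw : ∀ i, |w i| ≤ C) :
    ∃ T : H →L[𝕜] H, e.IsWeightedShift T w s := by
  classical
  have hv : Orthonormal 𝕜 (e ∘ s) := e.orthonormal.comp s hs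
  have hle (f : ℓ²(ι, 𝕜)) (i : ι) : ‖(w i : 𝕜) * f i‖ ≤ ‖(C • f) i‖ := by
    rw [norm_mul, RCLike.norm_ofReal, lp.coeFn_smul, Pi.smul_apply, norm_smul, Real.norm_eq_abs]
    exact mul_le_mul_of_nonneg_right ((hw i).trans (le_abs_self C)) (norm_nonneg _)
  let M : ℓ²(ι, 𝕜) →ₗ[𝕜] ℓ²(ι, 𝕜) :=
    { toFun f := ⟨fun i => (w i : 𝕜) * f i, (lp.memℓp (C • f)).mono' (hle f)⟩
      map_add' f g := lp.ext <| funext fun i => mul_add _ _ _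
      map_smul' c f := lp.ext <| funext fun i => mul_left_comm _ _ _ }
  have hM (f : ℓ²(ι, 𝕜)) : ‖M f‖ ≤ |C| * ‖f‖ := by
    rw [← Real.norm_eq_abs, ← lp.norm_const_smul two_ne_zero]
    exact lp.norm_mono two_ne_zero (hle f)
  -- multiply the coordinates by `w`, then send the `i`-th one to `e (s i)`
  refine ⟨hv.orthogonalFamily.linearIsometry.toContinuousLinearMap ∘L M.mkContinuous |C| hM ∘L
    e.repr.toContinuousLinearEquiv.toContinuousLinearMap, fun i => ?_⟩
  have hMi : M (lp.single 2 i 1) = lp.single 2 i (w i : 𝕜) := lp.ext <| funext fun j => by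
    by_cases hj : j = i
    · subst hj; simp [M]
    · simp [M, Pi.single_apply, hj]
  simp [e.repr_self, hMi, hv.orthogonalFamily.linearIsometry_apply_single]

end HilbertBasis

namespace SigmaFour

open HilbertBasis Function

def lowerFst (n : ℕ × ℕ) : ℕ × ℕ := (n.1 - 1, n.2)

def raiseFst (n : ℕ × ℕ) : ℕ × ℕ := (n.1 + 1, n.2)

def lowerSnd (n : ℕ × ℕ) : ℕ × ℕ := (n.1, n.2 - 1)

def raiseSnd (n : ℕ × ℕ) : ℕ × ℕ := (n.1, n.2 + 1)

theorem leftInverse_lowerFst_raiseFst : LeftInverse lowerFst raiseFst := fun _ => rfl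

theorem leftInverse_lowerSnd_raiseSnd : LeftInverse lowerSnd raiseSnd := fun _ => rfl

variable (q : ℝ)

noncomputable def weightR (n : ℕ × ℕ) : ℝ := q ^ (2 * (n.1 + n.2))

noncomputable def weightA (n : ℕ × ℕ) : ℝ := q ^ (n.1 + 2 * n.2) * q⁻¹ * √(1 - q ^ (2 * n.1))

-- the coefficients of `σ(b)*`; those of `σ(b)` are `weightBStar q ∘ raiseSnd`
noncomputable def weightBStar (n : ℕ × ℕ) : ℝ := q ^ (n.1 + n.2) * q⁻¹ * √(1 - q ^ (2 * n.2))

theorem weightA_eq_zero_of_notMem_range {n : ℕ × ℕ} (hn : n ∉ Set.range raiseFst) :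
    weightA q n = 0 := by
  obtain ⟨_ | k, m⟩ := n
  · simp [weightA]
  · exact absurd ⟨(k, m), rfl⟩ hn

theorem weightBStar_eq_zero_of_notMem_range {n : ℕ × ℕ} (hn : n ∉ Set.range raiseSnd) :
    weightBStar q n = 0 := by
  obtain ⟨k, _ | m⟩ := n
  · simp [weightBStar]
  · exact absurd ⟨(k, m), rfl⟩ hn

variable {q}

theorem abs_weightR_le (hq0 : 0 ≤ q) (hq1 : q ≤ 1) (n : ℕ × ℕ) : |weightR q n| ≤ 1 := by
  rw [weightR, abs_of_nonneg (by positivity)]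
  exact pow_le_one₀ hq0 hq1

theorem abs_pow_mul_inv_mul_sqrt_le (hq0 : 0 ≤ q) (hq1 : q ≤ 1) (k m : ℕ) :
    |q ^ k * q⁻¹ * √(1 - q ^ m)| ≤ q⁻¹ := by
  rw [abs_of_nonneg (by positivity)]
  have hsqrt : √(1 - q ^ m) ≤ 1 := Real.sqrt_le_one.mpr (by linarith [pow_nonneg hq0 m])
  calc q ^ k * q⁻¹ * √(1 - q ^ m) ≤ 1 * q⁻¹ * 1 := by
        gcongr
        exact pow_le_one₀ hq0 hq1
    _ = q⁻¹ := by ring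

theorem pow_mul_inv_mul_sqrt_sq (hq0 : 0 ≤ q) (hq1 : q ≤ 1) (k m : ℕ) :
    (q ^ k * q⁻¹ * √(1 - q ^ m)) ^ 2 = q ^ (2 * k) * (q ^ 2)⁻¹ * (1 - q ^ m) := by
  rw [mul_pow, mul_pow, Real.sq_sqrt (by linarith [pow_le_one₀ (n := m) hq0 hq1]), inv_pow,
    ← pow_mul, mul_comm k]

theorem abs_weightA_le (hq0 : 0 ≤ q) (hq1 : q ≤ 1) (n : ℕ × ℕ) : |weightA q n| ≤ q⁻¹ :=
  abs_pow_mul_inv_mul_sqrt_le hq0 hq1 _ _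

theorem abs_weightBStar_le (hq0 : 0 ≤ q) (hq1 : q ≤ 1) (n : ℕ × ℕ) : |weightBStar q n| ≤ q⁻¹ :=
  abs_pow_mul_inv_mul_sqrt_le hq0 hq1 _ _

theorem weightBStar_raiseSnd (hq : q ≠ 0) (n : ℕ × ℕ) :
    weightBStar q (raiseSnd n) = q ^ (n.1 + n.2) * √(1 - q ^ (2 * (n.2 + 1))) := by
  simp only [weightBStar, raiseSnd, ← add_assoc, pow_succ]
  field_simp

section Relations

variable {H : Type*} [NormedAddCommGroup H] [InnerProductSpace ℂ H]
  {e : HilbertBasis (ℕ × ℕ) ℂ H} {R a b : H →L[ℂ] H}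

theorem R_mul_b (hR : e.IsWeightedShift R (weightR q) id)
    (hb : e.IsWeightedShift b (weightBStar q ∘ raiseSnd) raiseSnd) :
    R * b = ((q : ℂ) ^ 2) • (b * R) := by
  refine (hR.mul hb).eq_of_weight_eq ((hb.mul hR).smul (r := q ^ 2) (by simp)) fun n => ?_
  simp only [weightR, raiseSnd, Function.comp_apply, id]
  ring

variable [CompleteSpace H]

theorem isWeightedShift_a (ha : e.IsWeightedShift (adjoint a) (weightA q ∘ raiseFst) raiseFst) :
    e.IsWeightedShift a (weightA q) lowerFst := by
  simpa only [adjoint_adjoint] using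
    ha.adjoint leftInverse_lowerFst_raiseFst fun _ => weightA_eq_zero_of_notMem_range q

theorem isWeightedShift_adjoint_b (hb : e.IsWeightedShift b (weightBStar q ∘ raiseSnd) raiseSnd) :
    e.IsWeightedShift (adjoint b) (weightBStar q) lowerSnd :=
  hb.adjoint leftInverse_lowerSnd_raiseSnd fun _ => weightBStar_eq_zero_of_notMem_range q

theorem isWeightedShift_a_mul_adjoint_a
    (ha : e.IsWeightedShift (adjoint a) (weightA q ∘ raiseFst) raiseFst) :
    e.IsWeightedShift (a * adjoint a) (fun n => weightA q (raiseFst n) ^ 2) id := by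
  simpa only [adjoint_adjoint] using
    ha.adjoint_mul_self leftInverse_lowerFst_raiseFst fun _ => weightA_eq_zero_of_notMem_range q

theorem isWeightedShift_adjoint_a_mul_a
    (ha : e.IsWeightedShift (adjoint a) (weightA q ∘ raiseFst) raiseFst) :
    e.IsWeightedShift (adjoint a * a) (fun n => weightA q n ^ 2) id := by
  simpa only [adjoint_adjoint] using
    ha.mul_adjoint leftInverse_lowerFst_raiseFst fun _ => weightA_eq_zero_of_notMem_range q

theorem isWeightedShift_adjoint_b_mul_b
    (hb : e.IsWeightedShift b (weightBStar q ∘ raiseSnd) raiseSnd) :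
    e.IsWeightedShift (adjoint b * b) (fun n => weightBStar q (raiseSnd n) ^ 2) id :=
  hb.adjoint_mul_self leftInverse_lowerSnd_raiseSnd fun _ => weightBStar_eq_zero_of_notMem_range q

theorem isWeightedShift_b_mul_adjoint_b
    (hb : e.IsWeightedShift b (weightBStar q ∘ raiseSnd) raiseSnd) :
    e.IsWeightedShift (b * adjoint b) (fun n => weightBStar q n ^ 2) id :=
  hb.mul_adjoint leftInverse_lowerSnd_raiseSnd fun _ => weightBStar_eq_zero_of_notMem_range q

theorem R_mul_a (hq : q ≠ 0) (hR : e.IsWeightedShift R (weightR q) id)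
    (ha : e.IsWeightedShift (adjoint a) (weightA q ∘ raiseFst) raiseFst) :
    R * a = ((q : ℂ) ^ 2)⁻¹ • (a * R) := by
  have ha' := isWeightedShift_a ha
  refine (hR.mul ha').eq_of_weight_eq ((ha'.mul hR).smul (r := (q ^ 2)⁻¹) (by simp)) fun n => ?_
  obtain ⟨_ | k, m⟩ := n
  · simp [weightA]
  · simp only [weightA, weightR, lowerFst, id, Nat.add_sub_cancel]
    field_simp
    ring

theorem a_mul_b (hq : q ≠ 0) (ha : e.IsWeightedShift (adjoint a) (weightA q ∘ raiseFst) raiseFst)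
    (hb : e.IsWeightedShift b (weightBStar q ∘ raiseSnd) raiseSnd) :
    a * b = ((q : ℂ) ^ 3) • (b * a) := by
  have ha' := isWeightedShift_a ha
  refine (ha'.mul hb).eq_of_weight_eq ((hb.mul ha').smul (r := q ^ 3) (by simp)) fun n => ?_
  obtain ⟨_ | k, m⟩ := n
  · simp [weightA, raiseSnd]
  · simp only [weightA, weightBStar, lowerFst, raiseSnd, Function.comp_apply, Nat.add_sub_cancel]
    field_simp
    ring

theorem a_mul_adjoint_b (hq : q ≠ 0)
    (ha : e.IsWeightedShift (adjoint a) (weightA q ∘ raiseFst) raiseFst)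
    (hb : e.IsWeightedShift b (weightBStar q ∘ raiseSnd) raiseSnd) :
    a * adjoint b = (q : ℂ)⁻¹ • (adjoint b * a) := by
  have ha' := isWeightedShift_a ha
  have hb' := isWeightedShift_adjoint_b hb
  refine (ha'.mul hb').eq_of_weight_eq ((hb'.mul ha').smul (r := q⁻¹) (by simp)) fun n => ?_
  obtain ⟨_ | k, _ | m⟩ := n
  · simp [weightA, lowerSnd]
  · simp [weightA, lowerSnd]
  · simp [weightBStar, lowerFst]
  · simp only [weightA, weightBStar, lowerFst, lowerSnd, Nat.add_sub_cancel]
    field_simp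
    ring

theorem a_mul_adjoint_a_add_b_mul_adjoint_b (hq0 : 0 < q) (hq1 : q ≤ 1)
    (hR : e.IsWeightedShift R (weightR q) id)
    (ha : e.IsWeightedShift (adjoint a) (weightA q ∘ raiseFst) raiseFst)
    (hb : e.IsWeightedShift b (weightBStar q ∘ raiseSnd) raiseSnd) :
    a * adjoint a + ((q : ℂ) ^ 2) • (b * adjoint b) = R * (1 - ((q : ℂ) ^ 2) • R) := by
  refine ((isWeightedShift_a_mul_adjoint_a ha).add
    ((isWeightedShift_b_mul_adjoint_b hb).smul (r := q ^ 2) (by simp))).eq_of_weight_eq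
    (hR.mul (IsWeightedShift.one.sub (hR.smul (r := q ^ 2) (by simp)))) fun n => ?_
  simp only [weightA, weightBStar, weightR, raiseFst, pow_mul_inv_mul_sqrt_sq hq0.le hq1,
    Pi.add_apply, Pi.sub_apply, Pi.one_apply]
  field_simp
  ring

theorem a_mul_adjoint_a_eq (hq0 : 0 < q) (hq1 : q ≤ 1) (hR : e.IsWeightedShift R (weightR q) id)
    (ha : e.IsWeightedShift (adjoint a) (weightA q ∘ raiseFst) raiseFst) :
    a * adjoint a = ((q : ℂ) ^ 2) • (adjoint a * a) + ((1 : ℂ) - (q : ℂ) ^ 2) • (R * R) := by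
  refine (isWeightedShift_a_mul_adjoint_a ha).eq_of_weight_eq
    (((isWeightedShift_adjoint_a_mul_a ha).smul (r := q ^ 2) (by simp)).add
      ((hR.mul hR).smul (r := 1 - q ^ 2) (by simp))) fun n => ?_
  simp only [weightA, weightR, raiseFst, pow_mul_inv_mul_sqrt_sq hq0.le hq1, Pi.add_apply, id]
  field_simp
  ring

theorem adjoint_b_mul_b_eq (hq0 : 0 < q) (hq1 : q ≤ 1) (hR : e.IsWeightedShift R (weightR q) id)
    (hb : e.IsWeightedShift b (weightBStar q ∘ raiseSnd) raiseSnd) :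
    adjoint b * b = ((q : ℂ) ^ 4) • (b * adjoint b) + ((1 : ℂ) - (q : ℂ) ^ 2) • R := by
  refine (isWeightedShift_adjoint_b_mul_b hb).eq_of_weight_eq
    (((isWeightedShift_b_mul_adjoint_b hb).smul (r := q ^ 4) (by simp)).add
      (hR.smul (r := 1 - q ^ 2) (by simp))) fun n => ?_
  simp only [weightBStar, weightR, raiseSnd, pow_mul_inv_mul_sqrt_sq hq0.le hq1, Pi.add_apply]
  field_simp
  ring

end Relations

end SigmaFour

open SigmaFour in
/-- The formulas `σ(R)|n₁,n₂⟩ = q^{2(n₁+n₂)}|n₁,n₂⟩`,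
`σ(a)|n₁,n₂⟩ = q^{n₁+2n₂-1}(1-q^{2n₁})^{1/2}|n₁-1,n₂⟩`,
`σ(b)|n₁,n₂⟩ = q^{n₁+n₂}(1-q^{2(n₂+1)})^{1/2}|n₁,n₂+1⟩`
define a bounded unitary *-representation of `Σ⁴_q` on `ℓ²(ℕ)⊗ℓ²(ℕ)`:
the operators are bounded and satisfy all defining relations of `Σ⁴_q`
(with `*` realized as the Hilbert space adjoint). -/
theorem sigma_representation_exists
    (q : ℝ) (hq0 : 0 < q) (hq1 : q < 1)
    (H : Type*) [NormedAddCommGroup H] [InnerProductSpace ℂ H] [CompleteSpace H]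
    (e : HilbertBasis (ℕ × ℕ) ℂ H) :
    ∃ σR σa σb : H →L[ℂ] H,
      (∀ n₁ n₂ : ℕ, σR (e (n₁, n₂)) = ((q : ℂ) ^ (2 * (n₁ + n₂))) • e (n₁, n₂)) ∧
      (∀ n₁ n₂ : ℕ, σa (e (n₁, n₂)) =
        ((q : ℂ) ^ (n₁ + 2 * n₂) * (q : ℂ)⁻¹ *
          (Real.sqrt (1 - q ^ (2 * n₁)) : ℂ)) • e (n₁ - 1, n₂)) ∧
      (∀ n₁ n₂ : ℕ, σb (e (n₁, n₂)) =
        ((q : ℂ) ^ (n₁ + n₂) *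
          (Real.sqrt (1 - q ^ (2 * (n₂ + 1))) : ℂ)) • e (n₁, n₂ + 1)) ∧
      adjoint σR = σR ∧
      σR * σa = ((q : ℂ) ^ 2)⁻¹ • (σa * σR) ∧
      σR * σb = ((q : ℂ) ^ 2) • (σb * σR) ∧
      σa * σb = ((q : ℂ) ^ 3) • (σb * σa) ∧
      σa * adjoint σb = ((q : ℂ))⁻¹ • (adjoint σb * σa) ∧
      σa * adjoint σa + ((q : ℂ) ^ 2) • (σb * adjoint σb) =
        σR * (1 - ((q : ℂ) ^ 2) • σR) ∧
      σa * adjoint σa = ((q : ℂ) ^ 2) • (adjoint σa * σa) +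
        ((1 : ℂ) - (q : ℂ) ^ 2) • (σR * σR) ∧
      adjoint σb * σb = ((q : ℂ) ^ 4) • (σb * adjoint σb) +
        ((1 : ℂ) - (q : ℂ) ^ 2) • σR := by
  obtain ⟨R, hR⟩ := e.exists_isWeightedShift Function.injective_id (abs_weightR_le hq0.le hq1.le)
  obtain ⟨A, hA⟩ := e.exists_isWeightedShift (w := weightA q ∘ raiseFst)
    leftInverse_lowerFst_raiseFst.injective fun n => abs_weightA_le hq0.le hq1.le (raiseFst n)
  obtain ⟨b, hb⟩ := e.exists_isWeightedShift (w := weightBStar q ∘ raiseSnd)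
    leftInverse_lowerSnd_raiseSnd.injective fun n => abs_weightBStar_le hq0.le hq1.le (raiseSnd n)
  set a := adjoint A
  have ha : e.IsWeightedShift (adjoint a) (weightA q ∘ raiseFst) raiseFst := by
    rwa [adjoint_adjoint]
  refine ⟨R, a, b, fun n₁ n₂ => ?_, fun n₁ n₂ => ?_, fun n₁ n₂ => ?_, hR.adjoint_eq_self,
    R_mul_a hq0.ne' hR ha, R_mul_b hR hb, a_mul_b hq0.ne' ha hb, a_mul_adjoint_b hq0.ne' ha hb,
    a_mul_adjoint_a_add_b_mul_adjoint_b hq0 hq1.le hR ha hb, a_mul_adjoint_a_eq hq0 hq1.le hR ha,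
    adjoint_b_mul_b_eq hq0 hq1.le hR hb⟩
  · simp [hR (n₁, n₂), weightR]
  · simp [isWeightedShift_a ha (n₁, n₂), weightA, lowerFst]
  · rw [hb, Function.comp_apply, weightBStar_raiseSnd hq0.ne']
    simp [raiseSnd]
end

section
/- With tr_σ the linear functional on Σ⁴_q defined by tr_σ(x) = tr(σ(x)) - ε(x), where ε(a)=ε(b)=ε(R)=0, ε(1)=1, the pairing of tr_σ with the zeroth Chern class ch₀(G) = Tr(G) = 2 - (1-q²)²R of the projector G equals -1; in particular ch₀(G) is a non-trivial class. -/
/-- The functional `tr_σ` on `Σ⁴_q` (with `tr_σ(1) = 0`, `tr_σ(R) = (1-q²)⁻²`,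
`tr_σ(a) = tr_σ(b) = 0`) pairs with the zeroth Chern class
`ch₀(G) = Tr(G) = 2 - (1-q²)²R` of the projector `G` to give `-1`; in
particular the pairing is non-zero, so `ch₀(G)` is a non-trivial class. -/
theorem chern_connes_pairing
    (q : ℝ) (hq0 : 0 < q) (hq1 : q < 1)
    (A : Type*) [Ring A] [StarRing A] [Algebra ℂ A]
    (a b R : A)
    (φ : A →ₗ[ℂ] ℂ)
    (hφ1 : φ 1 = 0)
    (hφR : φ R = (((1 - q ^ 2) ^ 2)⁻¹ : ℝ))
    (hφa : φ a = 0) (hφb : φ b = 0)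
    (G : Matrix (Fin 4) (Fin 4) A)
    (hG : G = !![((q : ℂ) ^ 2) • R, 0, (q : ℂ) • a, ((q : ℂ) ^ 2) • b;
                 0, ((q : ℂ) ^ 2) • R, (q : ℂ) • star b, -(((q : ℂ) ^ 3) • star a);
                 (q : ℂ) • star a, (q : ℂ) • b, 1 - R, 0;
                 ((q : ℂ) ^ 2) • star b, -(((q : ℂ) ^ 3) • a), 0, 1 - ((q : ℂ) ^ 4) • R]) :
    Matrix.trace G = (2 : A) - (((1 - q ^ 2) ^ 2 : ℝ) : ℂ) • R ∧
    φ (Matrix.trace G) = -1 ∧ φ (Matrix.trace G) ≠ 0 := by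
  have htr : Matrix.trace G = (2 : A) - (((1 - q ^ 2) ^ 2 : ℝ) : ℂ) • R := by
    subst hG
    have step : Matrix.trace !![((q : ℂ) ^ 2) • R, 0, (q : ℂ) • a, ((q : ℂ) ^ 2) • b;
                 0, ((q : ℂ) ^ 2) • R, (q : ℂ) • star b, -(((q : ℂ) ^ 3) • star a);
                 (q : ℂ) • star a, (q : ℂ) • b, 1 - R, 0;
                 ((q : ℂ) ^ 2) • star b, -(((q : ℂ) ^ 3) • a), 0, 1 - ((q : ℂ) ^ 4) • R]
        = (q:ℂ)^2 • R + (q:ℂ)^2 • R + (1 - R) + (1 - (q:ℂ)^4 • R) := by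
      simp [Matrix.trace, Fin.sum_univ_four]
    rw [step]
    have h : (((1 - q ^ 2) ^ 2 : ℝ) : ℂ) = 1 - 2 * (q:ℂ)^2 + (q:ℂ)^4 := by push_cast; ring
    rw [h, show (2:A) = 1 + 1 from by norm_num]
    module
  have h1 : (0:ℝ) < 1 - q ^ 2 := by nlinarith
  have hne : (((1 : ℂ) - (q:ℂ) ^ 2) ^ 2 : ℂ) ≠ 0 := by
    have : ((1:ℝ) - q ^ 2 : ℝ) ≠ 0 := ne_of_gt h1
    exact pow_ne_zero _ (by exact_mod_cast sub_ne_zero.mpr (by exact_mod_cast sub_ne_zero.mp this))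
  have hφ : φ (Matrix.trace G) = -1 := by
    rw [htr]
    have h2 : (2 : A) = (2 : ℂ) • (1 : A) := by
      rw [Algebra.smul_def, mul_one, map_ofNat]
    rw [sub_eq_add_neg, map_add, h2, map_smul, hφ1, ← neg_smul, map_smul, hφR]
    rw [smul_eq_mul, mul_zero, zero_add, smul_eq_mul]
    push_cast
    rw [neg_mul, mul_inv_cancel₀ hne]
  exact ⟨htr, hφ, by rw [hφ]; norm_num⟩
end

section
/- In Σ⁴_q with 0 < q < 1, every irreducible bounded *-representation ρ satisfies: there is a unit vector |λ⟩ with ρ(R)|λ⟩ = λ|λ⟩, ρ(a)|λ⟩ = ρ(b*)|λ⟩ = 0, and λ ∈ {0,1}. In particular, if ρ is the one-dimensional representation then ρ(a)=ρ(b)=ρ(R)=0. -/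
/-!
The relations give `R - R² = q² (a⋆a + b b⋆) ≥ 0`, so `0 ≤ R`, together with the twisted
commutations `a R = q² R a` and `b⋆ R = q² R b⋆`. These propagate through the continuous
functional calculus as `a f(R) = f(q² R) a`, so for a continuous `f` vanishing on `[0, q² ‖R‖]`
but not at `‖R‖ ∈ σ(R)`, the nonzero operator `f(R)` is annihilated by `a` and `b⋆` (if `R = 0`,
the identity already forces `a = b⋆ = 0`). A vector `u`
killed by `a` and `b⋆` satisfies `R² u = R u` by the identity above, and `R u` is again killed by
them, so either `R u = 0` or `R u` is an eigenvector with eigenvalue `1`.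
In dimension one, `a` and `b⋆` vanish on a spanning vector, and then `a a⋆ = q² a⋆a + (1 - q²) R²`
forces `R² = 0`.
-/

open ContinuousLinearMap

theorem mul_cfc_eq_cfc_mul_of_mul_eq {A : Type*} [Ring A] [StarRing A] [Algebra ℝ A]
    [TopologicalSpace A] [ContinuousFunctionalCalculus ℝ A IsSelfAdjoint] [IsTopologicalRing A]
    [T2Space A] {a b x : A} (h : x * a = b * x) (ha : IsSelfAdjoint a) (hb : IsSelfAdjoint b)
    (f : ℝ → ℝ) (hf : ContinuousOn f (spectrum ℝ a ∪ spectrum ℝ b)) :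
    x * cfc f a = cfc f b * x := by
  set s := spectrum ℝ a ∪ spectrum ℝ b
  have : CompactSpace s := isCompact_iff_compactSpace.mp
    ((ContinuousFunctionalCalculus.isCompact_spectrum a).union
      (ContinuousFunctionalCalculus.isCompact_spectrum b))
  have key (g : C(s, ℝ)) : x * cfcHomSuperset ha Set.subset_union_left g =
      cfcHomSuperset hb Set.subset_union_right g * x := by
    induction g using ContinuousMap.induction_on_of_compact with
    | const r =>
      rw [show ContinuousMap.const s r = algebraMap ℝ C(s, ℝ) r from rfl,
        AlgHomClass.commutes, AlgHomClass.commutes]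
      exact (Algebra.commutes r x).symm
    | id => rw [cfcHomSuperset_id, cfcHomSuperset_id]; exact h
    | star_id => rw [star_trivial, cfcHomSuperset_id, cfcHomSuperset_id]; exact h
    | add f g hf hg => rw [map_add, map_add, mul_add, add_mul, hf, hg]
    | mul f g hf hg => rw [map_mul, map_mul, ← mul_assoc, hf, mul_assoc, hg, mul_assoc]
    | frequently f hf =>
      exact hf.mem_of_closed (isClosed_eq
        (continuous_const.mul (cfcHomSuperset_continuous ..))
        ((cfcHomSuperset_continuous ..).mul continuous_const))
  rw [cfc_apply f a ha (hf.mono Set.subset_union_left),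
    cfc_apply f b hb (hf.mono Set.subset_union_right)]
  exact key ⟨s.domRestrict f, hf.domRestrict⟩

theorem CStarAlgebra.exists_ne_zero_forall_mul_eq_zero {A : Type*} [CStarAlgebra A]
    [PartialOrder A] [StarOrderedRing A] {R : A} (hR : 0 ≤ R) (hR0 : R ≠ 0) {c : ℝ}
    (hc0 : 0 ≤ c) (hc1 : c < 1) :
    ∃ N : A, N ≠ 0 ∧ ∀ x : A, x * R = c • (R * x) → x * N = 0 := by
  have : Nontrivial A := nontrivial_of_ne R 0 hR0
  have hRsa : IsSelfAdjoint R := .of_nonneg hR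
  have hnorm : 0 < ‖R‖ := norm_pos_iff.mpr hR0
  have hle (t : ℝ) (ht : t ∈ spectrum ℝ R) : t ≤ ‖R‖ :=
    (Real.le_norm_self t).trans (spectrum.norm_le_norm_of_mem ht)
  set f : ℝ → ℝ := fun t ↦ max (t - c * ‖R‖) 0
  have hf : Continuous f := by fun_prop
  refine ⟨cfc f R, fun h ↦ ?_, fun x hx ↦ ?_⟩
  · have hf0 : (spectrum ℝ R).EqOn f 0 := eqOn_of_cfc_eq_cfc (h.trans (cfc_zero ℝ R).symm)
    have : 0 < f ‖R‖ := lt_max_of_lt_left (by nlinarith)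
    exact this.ne' (hf0 (norm_mem_spectrum_of_nonneg hR))
  · have hf_vanish : cfc (fun t ↦ f (c * t)) R = 0 := by
      refine (cfc_congr fun t ht ↦ ?_).trans (cfc_zero ℝ R)
      exact max_eq_right (by nlinarith [hle t ht])
    rw [mul_cfc_eq_cfc_mul_of_mul_eq (b := c • R) (hx.trans (smul_mul_assoc c R x).symm) hRsa
      (.smul (.all c) hRsa) f hf.continuousOn, ← cfc_comp_const_mul c f R,
      hf_vanish, zero_mul]

theorem sub_mul_self_eq_smul_star_mul_add {A : Type*} [Ring A] [Star A] [Algebra ℂ A]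
    {a b R : A} {z : ℂ}
    (h5 : a * star a + z • (b * star b) = R * (1 - z • R))
    (h6 : a * star a = z • (star a * a) + (1 - z) • (R * R)) :
    R - R * R = z • (star a * a + b * star b) := by
  rw [mul_sub, mul_one, mul_smul_comm] at h5
  linear_combination (norm := module) h6 - h5

theorem exists_eigen_of_mul_eq_zero {A : Type*} [Ring A] [Star A] [Algebra ℝ A] {a b R N : A}
    {c d : ℝ} (hK : R - R * R = c • (star a * a + b * star b))
    (ha : a * R = d • (R * a)) (hb : star b * R = d • (R * star b))
    (hN : N ≠ 0) (haN : a * N = 0) (hbN : star b * N = 0) :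
    ∃ M : A, M ≠ 0 ∧ a * M = 0 ∧ star b * M = 0 ∧
      ∃ lam : ℝ, R * M = lam • M ∧ (lam = 0 ∨ lam = 1) := by
  have hRRN : R * (R * N) = R * N := by
    have h := congrArg (· * N) hK
    simp only [sub_mul, smul_mul_assoc, add_mul, mul_assoc, haN, hbN, mul_zero, add_zero,
      smul_zero] at h
    exact (sub_eq_zero.mp h).symm
  by_cases hRN : R * N = 0
  · exact ⟨N, hN, haN, hbN, 0, by rw [hRN, zero_smul], .inl rfl⟩
  · refine ⟨R * N, hRN, ?_, ?_, 1, by rw [hRRN, one_smul], .inr rfl⟩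
    · rw [← mul_assoc, ha, smul_mul_assoc, mul_assoc, haN, mul_zero, smul_zero]
    · rw [← mul_assoc, hb, smul_mul_assoc, mul_assoc, hbN, mul_zero, smul_zero]

theorem exists_ne_zero_mul_eq_zero_of_twisted {A : Type*} [CStarAlgebra A] [PartialOrder A]
    [StarOrderedRing A] [Nontrivial A] {a b R : A} {c : ℝ} (hc0 : 0 < c) (hc1 : c < 1)
    (hR : IsSelfAdjoint R) (hK : R - R * R = c • (star a * a + b * star b))
    (ha : a * R = c • (R * a)) (hb : star b * R = c • (R * star b)) :
    ∃ N : A, N ≠ 0 ∧ a * N = 0 ∧ star b * N = 0 := by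
  have hRR : 0 ≤ R - R * R := hK ▸ smul_nonneg hc0.le
    (add_nonneg (star_mul_self_nonneg a) (mul_star_self_nonneg b))
  have hRnonneg : 0 ≤ R := hR.mul_self_nonneg.trans (sub_nonneg.mp hRR)
  by_cases hRz : R = 0
  · rw [hRz, mul_zero, sub_zero, eq_comm, smul_eq_zero, or_iff_right hc0.ne',
      add_eq_zero_iff_of_nonneg (star_mul_self_nonneg a) (mul_star_self_nonneg b),
      CStarRing.star_mul_self_eq_zero_iff, CStarRing.mul_star_self_eq_zero_iff] at hK
    exact ⟨1, one_ne_zero, by rw [hK.1, zero_mul], by rw [hK.2, star_zero, zero_mul]⟩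
  · obtain ⟨N, hN, hkill⟩ := CStarAlgebra.exists_ne_zero_forall_mul_eq_zero hRnonneg hRz hc0.le hc1
    exact ⟨N, hN, hkill a ha, hkill _ hb⟩

theorem ContinuousLinearMap.exists_norm_apply_eq_one {𝕜 E F : Type*} [RCLike 𝕜]
    [SeminormedAddCommGroup E] [NormedSpace 𝕜 E] [NormedAddCommGroup F] [NormedSpace 𝕜 F]
    {T : E →L[𝕜] F} (hT : T ≠ 0) : ∃ x : E, ‖T x‖ = 1 := by
  obtain ⟨x, hx⟩ : ∃ x, T x ≠ 0 := by
    by_contra! h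
    exact hT (ext h)
  refine ⟨(‖T x‖⁻¹ : 𝕜) • x, ?_⟩
  rw [map_smul, norm_smul, norm_inv, RCLike.norm_ofReal, abs_norm,
    inv_mul_cancel₀ (norm_ne_zero_iff.mpr hx)]

theorem ContinuousLinearMap.eq_zero_of_finrank_eq_one {K V W : Type*} [DivisionRing K]
    [AddCommGroup V] [Module K V] [TopologicalSpace V] [AddCommGroup W] [Module K W]
    [TopologicalSpace W] (hV : Module.finrank K V = 1) {T : V →L[K] W} {v : V} (hv : v ≠ 0)
    (hTv : T v = 0) : T = 0 := by
  ext w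
  obtain ⟨k, rfl⟩ := (finrank_eq_one_iff_of_nonzero' v hv).mp hV w
  rw [map_smul, hTv, smul_zero, zero_apply]

theorem irreducible_representation_eigenvector_general
    (q : ℝ) (hq0 : 0 < q) (hq1 : q < 1)
    (H : Type*) [NormedAddCommGroup H] [InnerProductSpace ℂ H] [CompleteSpace H]
    [Nontrivial H]
    (ρa ρb ρR : H →L[ℂ] H)
    (hRsa : adjoint ρR = ρR)
    (rel1 : ρR * ρa = ((q : ℂ) ^ 2)⁻¹ • (ρa * ρR))
    (rel2 : ρR * ρb = ((q : ℂ) ^ 2) • (ρb * ρR))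
    (rel5 : ρa * adjoint ρa + ((q : ℂ) ^ 2) • (ρb * adjoint ρb) =
      ρR * (1 - ((q : ℂ) ^ 2) • ρR))
    (rel6 : ρa * adjoint ρa = ((q : ℂ) ^ 2) • (adjoint ρa * ρa) +
      ((1 : ℂ) - (q : ℂ) ^ 2) • (ρR * ρR)) :
    (∃ (v : H) (lam : ℝ), ‖v‖ = 1 ∧ ρR v = (lam : ℂ) • v ∧
      ρa v = 0 ∧ (adjoint ρb) v = 0 ∧ (lam = 0 ∨ lam = 1)) ∧
    (Module.finrank ℂ H = 1 → ρa = 0 ∧ ρb = 0 ∧ ρR = 0) := by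
  simp only [← star_eq_adjoint] at *
  have hR : IsSelfAdjoint ρR := hRsa
  have hq2 : (q : ℂ) ^ 2 = ((q ^ 2 : ℝ) : ℂ) := by push_cast; rfl
  have ha : ρa * ρR = (q ^ 2) • (ρR * ρa) := by
    rw [← Complex.coe_smul, rel1, smul_smul, ← hq2,
      mul_inv_cancel₀ (pow_ne_zero 2 (Complex.ofReal_ne_zero.mpr hq0.ne')), one_smul]
  have hb : star ρb * ρR = (q ^ 2) • (ρR * star ρb) := by
    have h := congr(star $rel2)
    rwa [star_mul, star_smul, star_mul, hR.star_eq, hq2, Complex.star_def, Complex.conj_ofReal,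
      Complex.coe_smul] at h
  have hK : ρR - ρR * ρR = (q ^ 2) • (star ρa * ρa + ρb * star ρb) := by
    rw [← Complex.coe_smul, ← hq2]
    exact sub_mul_self_eq_smul_star_mul_add rel5 rel6
  obtain ⟨N, hN, haN, hbN⟩ :=
    exists_ne_zero_mul_eq_zero_of_twisted (by positivity) (by nlinarith) hR hK ha hb
  obtain ⟨M, hM, haM, hbM, lam, hRM, hlam⟩ := exists_eigen_of_mul_eq_zero hK ha hb hN haN hbN
  obtain ⟨w, hw⟩ := exists_norm_apply_eq_one hM
  have hv : M w ≠ 0 := norm_ne_zero_iff.mp (hw ▸ one_ne_zero)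
  refine ⟨⟨M w, lam, hw, ?_, congr($haM w), congr($hbM w), hlam⟩, fun hdim ↦ ?_⟩
  · rw [Complex.coe_smul]
    exact congr($hRM w)
  have ha0 : ρa = 0 := eq_zero_of_finrank_eq_one hdim hv congr($haM w)
  have hb0 : ρb = 0 := star_eq_zero.mp (eq_zero_of_finrank_eq_one hdim hv congr($hbM w))
  refine ⟨ha0, hb0, ?_⟩
  have hq : (1 : ℂ) - (q : ℂ) ^ 2 ≠ 0 :=
    sub_ne_zero.mpr (by rw [hq2]; exact_mod_cast (by nlinarith))
  simp only [ha0, star_zero, zero_mul, smul_zero, zero_add] at rel6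
  rw [eq_comm, smul_eq_zero, or_iff_right hq] at rel6
  rwa [← CStarRing.star_mul_self_eq_zero_iff, hR.star_eq]

/-- Every irreducible bounded *-representation of `Σ⁴_q` (`0 < q < 1`) on a
nonzero Hilbert space admits a unit vector `|λ⟩` with `ρ(R)|λ⟩ = λ|λ⟩`,
`ρ(a)|λ⟩ = ρ(b*)|λ⟩ = 0`, and `λ ∈ {0,1}`. In particular, if the
representation is one-dimensional then `ρ(a) = ρ(b) = ρ(R) = 0`. -/
theorem irreducible_representation_eigenvector
    (q : ℝ) (hq0 : 0 < q) (hq1 : q < 1)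
    (H : Type*) [NormedAddCommGroup H] [InnerProductSpace ℂ H] [CompleteSpace H]
    [Nontrivial H]
    (ρa ρb ρR : H →L[ℂ] H)
    (hRsa : adjoint ρR = ρR)
    (rel1 : ρR * ρa = ((q : ℂ) ^ 2)⁻¹ • (ρa * ρR))
    (rel2 : ρR * ρb = ((q : ℂ) ^ 2) • (ρb * ρR))
    (rel3 : ρa * ρb = ((q : ℂ) ^ 3) • (ρb * ρa))
    (rel4 : ρa * adjoint ρb = ((q : ℂ))⁻¹ • (adjoint ρb * ρa))
    (rel5 : ρa * adjoint ρa + ((q : ℂ) ^ 2) • (ρb * adjoint ρb) =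
      ρR * (1 - ((q : ℂ) ^ 2) • ρR))
    (rel6 : ρa * adjoint ρa = ((q : ℂ) ^ 2) • (adjoint ρa * ρa) +
      ((1 : ℂ) - (q : ℂ) ^ 2) • (ρR * ρR))
    (rel7 : adjoint ρb * ρb = ((q : ℂ) ^ 4) • (ρb * adjoint ρb) +
      ((1 : ℂ) - (q : ℂ) ^ 2) • ρR)
    (hirr : ∀ V : Submodule ℂ H, IsClosed (V : Set H) →
      (∀ v ∈ V, ρa v ∈ V ∧ ρb v ∈ V ∧ ρR v ∈ V ∧
        adjoint ρa v ∈ V ∧ adjoint ρb v ∈ V) → V = ⊥ ∨ V = ⊤) :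
    (∃ (v : H) (lam : ℝ), ‖v‖ = 1 ∧ ρR v = (lam : ℂ) • v ∧
      ρa v = 0 ∧ (adjoint ρb) v = 0 ∧ (lam = 0 ∨ lam = 1)) ∧
    (Module.finrank ℂ H = 1 → ρa = 0 ∧ ρb = 0 ∧ ρR = 0) :=
  irreducible_representation_eigenvector_general q hq0 hq1 H ρa ρb ρR hRsa rel1 rel2 rel5 rel6
end

section
/- In the *-algebra generated by ζ₁ = R⁻¹a and ζ₂ = bR⁻¹ (in any representation of Σ⁴_q where R is invertible), the relations ζ₁ζ₂ = q⁻¹ζ₂ζ₁, ζ₁ζ₁* = q⁻²ζ₁*ζ₁ + (1-q²), ζ₁ζ₂* = q⁻¹ζ₂*ζ₁, and ζ₂ζ₂* = q²ζ₂*ζ₂ - (1-q²)(q² + ζ₁*ζ₁) hold. -/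
/-!
Moving every `Rinv` to the left turns each product of two of `ζ₁, ζ₂, ζ₁*, ζ₂*` into a scalar
times `Rinv * Rinv` times a quadratic monomial in `a, b, a*, b*`; each relation of the quantum
plane then reduces to one defining relation of `Σ⁴_q`, and for `ζ₂ζ₂*` to the consequence
`q²(a*a + bb*) = R - R²` of `rel5` and `rel6`. Moving `Rinv` past `a*` and `b*` needs the starred
`rel1` and `rel2`, hence `star (q² • 1) = q² • 1`, which the relations force.
-/

section CommSemiring

variable {K A : Type*} [CommSemiring K] [Semiring A] [Algebra K A]

def QCommute (c : K) (x y : A) : Prop := x * y = c • (y * x)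

namespace QCommute

variable {c : K} {x y r : A}

theorem star [StarRing A] (hc : star (algebraMap K A c) = algebraMap K A c)
    (h : QCommute c x y) : QCommute c (star y) (star x) := by
  rw [QCommute, ← star_mul, h, Algebra.smul_def, star_mul, hc, ← Algebra.commutes,
    ← Algebra.smul_def, star_mul]

theorem inverse {R Rinv : A} (h₁ : Rinv * R = 1) (h₂ : R * Rinv = 1) (h : QCommute c R x) :
    QCommute c x Rinv := by
  unfold QCommute at *
  calc x * Rinv = Rinv * (R * x) * Rinv := by rw [← mul_assoc, h₁, one_mul]
    _ = c • (Rinv * x * (R * Rinv)) := by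
      rw [h]; simp only [mul_smul_comm, smul_mul_assoc, mul_assoc]
    _ = c • (Rinv * x) := by rw [h₂, mul_one]

theorem mul_left_mul_mul_left (hx : QCommute c x r) (y : A) :
    r * x * (r * y) = c • (r * r * (x * y)) := by
  rw [← mul_assoc, mul_assoc r x r, hx]
  simp only [mul_smul_comm, smul_mul_assoc, mul_assoc]

theorem mul_right_mul_mul_left (hx : QCommute c x r) (y : A) :
    x * r * (r * y) = c ^ 2 • (r * r * (x * y)) := by
  rw [hx, smul_mul_assoc, hx.mul_left_mul_mul_left, smul_smul, sq]

theorem mul_left_mul_mul_right {d : K} (hx : QCommute c x r) (hy : QCommute d y r) :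
    r * x * (y * r) = (c * d) • (r * r * (x * y)) := by
  rw [hy, mul_smul_comm, hx.mul_left_mul_mul_left, smul_smul, mul_comm]

end QCommute

end CommSemiring

theorem QCommute.symm {K A : Type*} [Field K] [Semiring A] [Algebra K A] {c : K} {x y : A}
    (hc : c ≠ 0) (h : QCommute c x y) : QCommute c⁻¹ y x := by
  rw [QCommute, h, inv_smul_smul₀ hc]

/- No `StarModule` is assumed, so `star` need not fix scalars. With `τ = algebraMap K A t`, the
element `d = star τ - τ` is central; comparing `h5`, `h6` with their stars gives `d a*a = d R²` and
`d bb* = -d R²`, hence `d R = d`; then `hRb` gives `(1 - t) d b = 0`, so for `t ≠ 1`,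
`d = d R² = -d b b* = 0`. -/
theorem star_algebraMap_eq_self_of_relations {K A : Type*} [Field K] [Ring A] [StarRing A]
    [Algebra K A] {t : K} {a b R Rinv : A} (hR : star R = R) (hRRinv : R * Rinv = 1)
    (hRb : R * b = t • (b * R))
    (h5 : a * star a + t • (b * star b) = R * (1 - t • R))
    (h6 : a * star a = t • (star a * a) + (1 - t) • R ^ 2) :
    star (algebraMap K A t) = algebraMap K A t := by
  rcases eq_or_ne t 1 with rfl | ht
  · simp
  have h5' := congrArg star h5
  have h6' := congrArg star h6
  simp only [Algebra.smul_def, map_sub, map_one, star_add, star_mul, star_sub, star_one,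
    star_star, star_pow, hR] at h5 h6 h5' h6' hRb
  set τ := algebraMap K A t
  set s := star τ
  have hτ : ∀ x, τ * x = x * τ := Algebra.commutes t
  have hs : ∀ x, s * x = x * s := fun x => by
    simpa using ((Algebra.commute_algebraMap_left t (star x)).star_star).eq
  obtain ⟨d, hd⟩ : ∃ d, d = s - τ := ⟨_, rfl⟩
  have hdc : ∀ x, d * x = x * d := fun x => by
    linear_combination (norm := noncomm_ring) hd * x - x * hd + hs x - hτ x
  have hda : d * (star a * a) = d * R ^ 2 := by
    linear_combination (norm := noncomm_ring)
      h6 - h6' + hd * (star a * a - R ^ 2) + hs (star a * a) - hs (R ^ 2)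
  have hdbb : d * (b * star b) = -(d * R ^ 2) := by
    linear_combination (norm := noncomm_ring)
      h5' - h5 + hd * (b * star b + R ^ 2) + hs (b * star b) - hτ R * R - R * hs R + hs (R ^ 2)
  have hdR : d * R = d := by
    have hτX : τ * (star a * a + b * star b) = R - R ^ 2 := by
      linear_combination (norm := noncomm_ring) h5 - h6 + hτ R * R
    linear_combination (norm := noncomm_ring)
      -(-d * hτX + τ * hda + τ * hdbb - hτ d * (star a * a + b * star b)) * Rinv
        - d * R * hRRinv + d * hRRinv
  have hdb : d * b = 0 := by
    have h : (1 - τ) * (d * b) = 0 := by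
      linear_combination (norm := noncomm_ring)
        d * hRb - hdR * b + hdc τ * b * R + τ * hdc b * R + τ * b * hdR - τ * hdc b
    have hunit : algebraMap K A (1 - t)⁻¹ * (1 - τ) = 1 := by
      rw [← map_one (algebraMap K A), ← map_sub, ← map_mul,
        inv_mul_cancel₀ (sub_ne_zero.2 ht.symm)]
    linear_combination (norm := noncomm_ring) algebraMap K A (1 - t)⁻¹ * h - hunit * (d * b)
  have : d = 0 := by
    linear_combination (norm := noncomm_ring) -hdb * star b + hdbb - hdR * R - hdR
  rwa [hd, sub_eq_zero] at this

theorem zeta_two_mul_star_zeta_two {K A : Type*} [Field K] [Ring A] [StarRing A] [Algebra K A]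
    {q : K} (hq : q ≠ 0) {a b R Rinv : A} (hRinv : Rinv * R = 1)
    (hb : QCommute (q ^ 2) b Rinv) (hb' : QCommute (q ^ 2)⁻¹ (star b) Rinv)
    (ha' : QCommute (q ^ 2) (star a) Rinv)
    (rel5 : a * star a + q ^ 2 • (b * star b) = R * (1 - q ^ 2 • R))
    (rel6 : a * star a = q ^ 2 • (star a * a) + (1 - q ^ 2) • R ^ 2)
    (rel7 : star b * b = q ^ 4 • (b * star b) + (1 - q ^ 2) • R) :
    b * Rinv * (Rinv * star b) = q ^ 2 • (Rinv * star b * (b * Rinv)) -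
      (1 - q ^ 2) • (q ^ 2 • (1 : A) + star a * Rinv * (Rinv * a)) := by
  have hRR1 : Rinv * Rinv * R = Rinv := by rw [mul_assoc, hRinv, mul_one]
  have hRR2 : Rinv * Rinv * R ^ 2 = 1 := by rw [sq, ← mul_assoc, hRR1, hRinv]
  have hsum : q ^ 2 • (star a * a) + q ^ 2 • (b * star b) = R - R ^ 2 := by
    linear_combination (norm := skip) rel5 - rel6
    simp only [mul_sub, mul_one, mul_smul_comm, sq]
    module
  rw [hb.mul_right_mul_mul_left, hb'.mul_left_mul_mul_right hb, ha'.mul_right_mul_mul_left,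
    rel7, inv_mul_cancel₀ (pow_ne_zero 2 hq), one_smul]
  linear_combination (norm := skip) (q ^ 2 * (1 - q ^ 2)) • (Rinv * Rinv * hsum)
  simp only [mul_add, mul_sub, mul_smul_comm, hRR1, hRR2]
  module

/-- In any unital *-algebra containing elements `a`, `b`, `R` satisfying the
`Σ⁴_q` relations with `R` self-adjoint and invertible, the "stereographic"
elements `ζ₁ = R⁻¹a` and `ζ₂ = bR⁻¹` satisfy the relations of the quantum
plane `ℂ²_q`: `ζ₁ζ₂ = q⁻¹ζ₂ζ₁`, `ζ₁ζ₁* = q⁻²ζ₁*ζ₁ + (1-q²)`,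
`ζ₁ζ₂* = q⁻¹ζ₂*ζ₁`, `ζ₂ζ₂* = q²ζ₂*ζ₂ - (1-q²)(q² + ζ₁*ζ₁)`. -/
theorem quantum_stereographic_relations
    (q : ℝ) (hq : q ≠ 0)
    (A : Type*) [Ring A] [StarRing A] [Algebra ℝ A]
    (a b R Rinv : A) (hRsa : star R = R)
    (hRinv₁ : Rinv * R = 1) (hRinv₂ : R * Rinv = 1)
    (rel1 : R * a = (q ^ 2)⁻¹ • (a * R))
    (rel2 : R * b = q ^ 2 • (b * R))
    (rel3 : a * b = q ^ 3 • (b * a))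
    (rel4 : a * star b = q⁻¹ • (star b * a))
    (rel5 : a * star a + q ^ 2 • (b * star b) = R * (1 - q ^ 2 • R))
    (rel6 : a * star a = q ^ 2 • (star a * a) + (1 - q ^ 2) • R ^ 2)
    (rel7 : star b * b = q ^ 4 • (b * star b) + (1 - q ^ 2) • R)
    (ζ₁ ζ₂ : A) (hζ₁ : ζ₁ = Rinv * a) (hζ₂ : ζ₂ = b * Rinv) :
    ζ₁ * ζ₂ = q⁻¹ • (ζ₂ * ζ₁) ∧
    ζ₁ * star ζ₁ = (q ^ 2)⁻¹ • (star ζ₁ * ζ₁) + (1 - q ^ 2) • (1 : A) ∧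
    ζ₁ * star ζ₂ = q⁻¹ • (star ζ₂ * ζ₁) ∧
    ζ₂ * star ζ₂ = q ^ 2 • (star ζ₂ * ζ₂) -
      (1 - q ^ 2) • (q ^ 2 • (1 : A) + star ζ₁ * ζ₁) := by
  have hq2 : q ^ 2 ≠ 0 := pow_ne_zero 2 hq
  have hstar := star_algebraMap_eq_self_of_relations hRsa hRinv₂ rel2 rel5 rel6
  have ha : QCommute (q ^ 2)⁻¹ a Rinv := QCommute.inverse hRinv₁ hRinv₂ rel1
  have hb : QCommute (q ^ 2) b Rinv := QCommute.inverse hRinv₁ hRinv₂ rel2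
  have ha' : QCommute (q ^ 2) (star a) Rinv := by
    have h := (inv_inv (q ^ 2) ▸ QCommute.symm (inv_ne_zero hq2) rel1).star hstar
    rw [hRsa] at h
    exact h.inverse hRinv₁ hRinv₂
  have hb' : QCommute (q ^ 2)⁻¹ (star b) Rinv := by
    have h := QCommute.star hstar rel2
    rw [hRsa] at h
    exact (h.symm hq2).inverse hRinv₁ hRinv₂
  have hstarRinv : star Rinv = Rinv :=
    left_inv_eq_right_inv (by rw [← hRsa, ← star_mul, hRinv₂, star_one]) hRinv₂
  have hRR : Rinv * Rinv * R ^ 2 = 1 := by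
    rw [sq, ← mul_assoc, mul_assoc Rinv Rinv R, hRinv₁, mul_one, hRinv₁]
  subst hζ₁ hζ₂
  simp only [star_mul, hstarRinv]
  refine ⟨?_, ?_, ?_, ?_⟩
  · rw [ha.mul_left_mul_mul_right hb, hb.mul_right_mul_mul_left, rel3, mul_smul_comm]
    match_scalars
    field_simp
  · rw [ha.mul_left_mul_mul_right ha', ha'.mul_right_mul_mul_left, rel6]
    simp only [mul_add, mul_smul_comm, hRR, smul_smul]
    match_scalars <;> field_simp
  · rw [ha.mul_left_mul_mul_left, hb'.mul_left_mul_mul_left, rel4, mul_smul_comm]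
    match_scalars
    field_simp
  · exact zeta_two_mul_star_zeta_two hq hRinv₁ hb hb' ha' rel5 rel6 rel7
end
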